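/- arXiv:2012.03828 — 2 statements merged into one kernel-verified Lean document; each statement's English description precedes it below -/
import Mathlib

section
/- Let λ/μ be a skew shape with n boxes and let π = (T_0 →^{s_{i_1}} T_1 →^{s_{i_2}} ⋯ →^{s_{i_k}} T_k) be any path in the weak Bruhat graph on SYT(λ/μ). Then for every S ∈ SYT(λ/μ), the coefficient of v_S in the vector (σ_{i_k} ∘ ⋯ ∘ σ_{i_2} ∘ σ_{i_1})(v_{T_0}), where σ_i denotes the seminormal operator of s_i, equals Σ_{ω ⊆ π, ω terminating at S} wt_π(ω). In particular, for two paths π and π′ that both start at the column reading tableau C and both end at the same tableau T, the sums Σ_{ω ⊆ π terminating at S} wt_π(ω) and Σ_{ω′ ⊆ π′ terminating at S} wt_{π′}(ω′) coincide for every S. -/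
open scoped Classical

noncomputable section

/-- A skew shape `λ/μ`: a pair of Young diagrams with `μ ⊆ λ`. -/
structure SkewShape where
  lam : YoungDiagram
  mu : YoungDiagram
  sub : mu ≤ lam

namespace SkewShape

/-- The boxes of the skew shape: boxes of `λ` not in `μ`. -/
def cells (sh : SkewShape) : Finset (ℕ × ℕ) := sh.lam.cells \ sh.mu.cells

/-- The number `n` of boxes of the skew shape. -/
def nb (sh : SkewShape) : ℕ := sh.cells.card

/-- `f` is a filling of the skew shape with `1, …, n`, each appearing exactly once
(normalized to be `0` off the shape). -/
def IsFilling (sh : SkewShape) (f : ℕ × ℕ → ℕ) : Prop :=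
  Set.BijOn f (↑sh.cells) (↑(Finset.Icc 1 sh.nb)) ∧ ∀ b, b ∉ sh.cells → f b = 0

/-- Entries increase from left to right along rows and from top to bottom down columns. -/
def IsRowColStrict (sh : SkewShape) (f : ℕ × ℕ → ℕ) : Prop :=
  (∀ x y : ℕ, (x, y) ∈ sh.cells → (x, y + 1) ∈ sh.cells → f (x, y) < f (x, y + 1)) ∧
  (∀ x y : ℕ, (x, y) ∈ sh.cells → (x + 1, y) ∈ sh.cells → f (x, y) < f (x + 1, y))

/-- The set of standard Young tableaux of shape `λ/μ`. -/
def SYT (sh : SkewShape) : Set ((ℕ × ℕ) → ℕ) := {f | sh.IsFilling f ∧ sh.IsRowColStrict f}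

/-- Standard Young tableaux of shape `λ/μ`, as a type. -/
def SYTt (sh : SkewShape) : Type := {f : (ℕ × ℕ) → ℕ // f ∈ sh.SYT}

/-- The box of the tableau `f` containing the entry `i`. -/
def boxOf (sh : SkewShape) (f : (ℕ × ℕ) → ℕ) (i : ℕ) : ℕ × ℕ :=
  Function.invFunOn f (↑sh.cells) i

end SkewShape

/-- The content `ct(b) = y - x` of a box `b = (x, y)` (row `x`, column `y`). -/
def ctZ (b : ℕ × ℕ) : ℤ := (b.2 : ℤ) - (b.1 : ℤ)

/-- Exchange the entries `i` and `i+1` in a filling. -/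
def sApply (i : ℕ) (f : (ℕ × ℕ) → ℕ) : (ℕ × ℕ) → ℕ := fun b => Equiv.swap i (i + 1) (f b)

/-- Column-reading order on boxes: by column (left to right), then by row (top to bottom). -/
def colLt (b b' : ℕ × ℕ) : Prop := b.2 < b'.2 ∨ (b.2 = b'.2 ∧ b.1 < b'.1)

namespace SkewShape

/-- The column reading tableau `C` of the skew shape: enter `1, …, n` consecutively down
the columns, filling the columns from left to right. -/
def colReading (sh : SkewShape) : (ℕ × ℕ) → ℕ :=
  fun b => if b ∈ sh.cells then 1 + (sh.cells.filter fun b' => colLt b' b).card else 0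

/-- The coefficient `a_{i,j}(T) = 1 / (ct(T(j)) - ct(T(i)))`. -/
def aIJ (sh : SkewShape) (f : (ℕ × ℕ) → ℕ) (i j : ℕ) : ℂ :=
  1 / ((ctZ (sh.boxOf f j) : ℂ) - (ctZ (sh.boxOf f i) : ℂ))

/-- The coefficient `a_i(T) = a_{i,i+1}(T)`. -/
def aI (sh : SkewShape) (f : (ℕ × ℕ) → ℕ) (i : ℕ) : ℂ := sh.aIJ f i (i + 1)

/-- The seminormal basis vector `v_f` (or `0` if `f` is not standard). -/
def vOf (sh : SkewShape) (f : (ℕ × ℕ) → ℕ) : sh.SYTt →₀ ℂ :=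
  if h : f ∈ sh.SYT then Finsupp.single ⟨f, h⟩ 1 else 0

/-- The seminormal operator of the simple transposition `s_i`:
`σ_i v_T = a_i(T) v_T + (1 + a_i(T)) v_{s_i(T)}`. -/
def semiOp (sh : SkewShape) (i : ℕ) : (sh.SYTt →₀ ℂ) →ₗ[ℂ] (sh.SYTt →₀ ℂ) :=
  Finsupp.lsum ℂ fun T : sh.SYTt =>
    LinearMap.toSpanSingleton ℂ _
      (sh.aI T.1 i • sh.vOf T.1 + (1 + sh.aI T.1 i) • sh.vOf (sApply i T.1))

/-- `opWord sh [i_1, …, i_k] = σ_{i_1} ∘ σ_{i_2} ∘ ⋯ ∘ σ_{i_k}`. -/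
def opWord (sh : SkewShape) : List ℕ → ((sh.SYTt →₀ ℂ) →ₗ[ℂ] (sh.SYTt →₀ ℂ))
  | [] => LinearMap.id
  | i :: is => semiOp sh i ∘ₗ opWord sh is

end SkewShape

/-- The permutation `s_{i_1} s_{i_2} ⋯ s_{i_k}` determined by a list of indices. -/
def wordProd (l : List ℕ) : Equiv.Perm ℕ := (l.map fun i => Equiv.swap i (i + 1)).prod

/-- The letters of the word index simple transpositions `s_1, …, s_{n-1}` of `S_n`. -/
def IsSnWord (n : ℕ) (l : List ℕ) : Prop := ∀ i ∈ l, 1 ≤ i ∧ i + 1 ≤ n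

/-- `l` is a reduced word for `w` in `S_n`. -/
def IsReducedWord (n : ℕ) (w : Equiv.Perm ℕ) (l : List ℕ) : Prop :=
  IsSnWord n l ∧ wordProd l = w ∧
    ∀ l' : List ℕ, IsSnWord n l' → wordProd l' = w → l.length ≤ l'.length

/-- The Coxeter length of `w` in `S_n`: the minimal number of simple transpositions
in a word for `w`. -/
def permLength (n : ℕ) (w : Equiv.Perm ℕ) : ℕ :=
  sInf {k | ∃ l : List ℕ, IsSnWord n l ∧ l.length = k ∧ wordProd l = w}

/-- Bruhat order on `S_n`: `σ ≤ τ` iff some reduced word for `τ` contains a subword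
that is a reduced word for `σ`. -/
def BruhatLE (n : ℕ) (σ τ : Equiv.Perm ℕ) : Prop :=
  ∃ lτ : List ℕ, IsReducedWord n τ lτ ∧ ∃ lσ : List ℕ, lσ.Sublist lτ ∧ IsReducedWord n σ lσ

namespace SkewShape

/-- `w` is the word `w_f` of the tableau `f`: `w(C) = f`, with `w` fixing everything
outside `{1, …, n}`. -/
def IsWordOf (sh : SkewShape) (f : (ℕ × ℕ) → ℕ) (w : Equiv.Perm ℕ) : Prop :=
  (∀ b ∈ sh.cells, w (sh.colReading b) = f b) ∧ ∀ m, m ∉ Finset.Icc 1 sh.nb → w m = m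

/-- Bruhat order on standard tableaux: `S ≤ T` iff `w_S ≤ w_T` in Bruhat order on `S_n`. -/
def tabLE (sh : SkewShape) (f g : (ℕ × ℕ) → ℕ) : Prop :=
  ∃ wf wg : Equiv.Perm ℕ, sh.IsWordOf f wf ∧ sh.IsWordOf g wg ∧ BruhatLE sh.nb wf wg

end SkewShape

/-- Apply the letters of a list, left to right, to a filling. -/
def applyWord : List ℕ → ((ℕ × ℕ) → ℕ) → ((ℕ × ℕ) → ℕ)
  | [], f => f
  | i :: is, f => applyWord is (sApply i f)

namespace SkewShape

/-- `(f, [i_1, …, i_k])` is a path `f →^{s_{i_1}} ⋯ →^{s_{i_k}}` in the weak Bruhat graph: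
every tableau along the way is standard. -/
def IsPath (sh : SkewShape) : ((ℕ × ℕ) → ℕ) → List ℕ → Prop
  | f, [] => f ∈ sh.SYT
  | f, i :: is => f ∈ sh.SYT ∧ sh.IsPath (sApply i f) is

/-- `(f, [i_1, …, i_k], [z_1, …, z_k])` is a subpath of the path starting at `f` with letters
`[i_1, …, i_k]`; at step `j` one moves by `s_{i_j}` if `z_j = true` and waits otherwise.
All intermediate tableaux must be standard. -/
def IsSubpath (sh : SkewShape) : ((ℕ × ℕ) → ℕ) → List ℕ → List Bool → Prop
  | f, [], [] => f ∈ sh.SYT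
  | f, i :: is, z :: zs => f ∈ sh.SYT ∧ sh.IsSubpath (if z then sApply i f else f) is zs
  | _, _, _ => False

end SkewShape

/-- The tableau at which a subpath terminates. -/
def subEnd : ((ℕ × ℕ) → ℕ) → List ℕ → List Bool → ((ℕ × ℕ) → ℕ)
  | f, [], _ => f
  | f, _ :: _, [] => f
  | f, i :: is, z :: zs => subEnd (if z then sApply i f else f) is zs

namespace SkewShape

/-- The `π`-weight of a subpath: the product of `a_{i_j}(S_{j-1})` over waiting steps and
`1 + a_{i_j}(S_{j-1})` over moving steps. -/
def subWeight (sh : SkewShape) : ((ℕ × ℕ) → ℕ) → List ℕ → List Bool → ℂ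
  | _, [], _ => 1
  | _, _ :: _, [] => 1
  | f, i :: is, z :: zs =>
      (if z then 1 + sh.aI f i else sh.aI f i) * sh.subWeight (if z then sApply i f else f) is zs

/-- The transition coefficient computed from a path: the sum of `π`-weights of all subpaths
of the path `(f₀, is)` terminating at `g`. -/
def pathCoeff (sh : SkewShape) (f₀ : (ℕ × ℕ) → ℕ) (is : List ℕ) (g : (ℕ × ℕ) → ℕ) : ℂ :=
  ∑ zs : Fin is.length → Bool,
    if sh.IsSubpath f₀ is (List.ofFn zs) ∧ subEnd f₀ is (List.ofFn zs) = g then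
      sh.subWeight f₀ is (List.ofFn zs)
    else 0

/-- The coefficient of `v_g` in `(σ_{i_1} ∘ ⋯ ∘ σ_{i_k})(v_C)` (or `0` if `g` is not
standard). -/
def natCoeff (sh : SkewShape) (l : List ℕ) (g : (ℕ × ℕ) → ℕ) : ℂ :=
  if h : g ∈ sh.SYT then (sh.opWord l (sh.vOf sh.colReading)) ⟨g, h⟩ else 0

end SkewShape

end

/-! ### Auxiliary lemmas -/

noncomputable section AuxProofs

open Function

namespace SkewShape

variable (sh : SkewShape)

lemma mem_cells_iff {b : ℕ × ℕ} : b ∈ sh.cells ↔ b ∈ sh.lam ∧ b ∉ sh.mu := by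
  simp [cells, YoungDiagram.mem_cells]

lemma between_row {x y1 y2 y : ℕ} (h1 : (x, y1) ∈ sh.cells) (h2 : (x, y2) ∈ sh.cells)
    (hy1 : y1 ≤ y) (hy2 : y ≤ y2) : (x, y) ∈ sh.cells := by
  rw [mem_cells_iff] at *
  exact ⟨sh.lam.up_left_mem le_rfl hy2 h2.1, fun hm => h1.2 (sh.mu.up_left_mem le_rfl hy1 hm)⟩

lemma between_col {x1 x2 x y : ℕ} (h1 : (x1, y) ∈ sh.cells) (h2 : (x2, y) ∈ sh.cells)
    (hx1 : x1 ≤ x) (hx2 : x ≤ x2) : (x, y) ∈ sh.cells := by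
  rw [mem_cells_iff] at *
  exact ⟨sh.lam.up_left_mem hx2 le_rfl h2.1, fun hm => h1.2 (sh.mu.up_left_mem hx1 le_rfl hm)⟩

lemma corner_mem {x1 y1 x2 y2 : ℕ} (h1 : (x1, y1) ∈ sh.cells) (h2 : (x2, y2) ∈ sh.cells)
    (hx : x1 ≤ x2) (hy : y1 ≤ y2) : (x1, y2) ∈ sh.cells ∧ (x2, y1) ∈ sh.cells := by
  rw [mem_cells_iff] at h1 h2
  rw [mem_cells_iff, mem_cells_iff]
  exact ⟨⟨sh.lam.up_left_mem hx le_rfl h2.1, fun hm => h1.2 (sh.mu.up_left_mem le_rfl hy hm)⟩,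
    ⟨sh.lam.up_left_mem le_rfl hy h2.1, fun hm => h1.2 (sh.mu.up_left_mem hx le_rfl hm)⟩⟩

variable {f : (ℕ × ℕ) → ℕ}

lemma lt_of_row (hf : f ∈ sh.SYT) {x y1 y2 : ℕ} (h1 : (x, y1) ∈ sh.cells)
    (h2 : (x, y2) ∈ sh.cells) (h : y1 < y2) : f (x, y1) < f (x, y2) := by
  induction y2 with
  | zero => omega
  | succ m ih =>
    rcases Nat.lt_or_ge y1 m with hm | hm
    · have hmem : (x, m) ∈ sh.cells := sh.between_row h1 h2 (by omega) (by omega)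
      exact (ih hmem hm).trans (hf.2.1 x m hmem h2)
    · have : y1 = m := by omega
      subst this
      exact hf.2.1 x y1 h1 h2

lemma lt_of_col (hf : f ∈ sh.SYT) {x1 x2 y : ℕ} (h1 : (x1, y) ∈ sh.cells)
    (h2 : (x2, y) ∈ sh.cells) (h : x1 < x2) : f (x1, y) < f (x2, y) := by
  induction x2 with
  | zero => omega
  | succ m ih =>
    rcases Nat.lt_or_ge x1 m with hm | hm
    · have hmem : (m, y) ∈ sh.cells := sh.between_col h1 h2 (by omega) (by omega)
      exact (ih hmem hm).trans (hf.2.2 m y hmem h2)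
    · have : x1 = m := by omega
      subst this
      exact hf.2.2 x1 y h1 h2

lemma injOn_of_SYT (hf : f ∈ sh.SYT) : Set.InjOn f ↑sh.cells := hf.1.1.2.1

lemma diag_lt (hf : f ∈ sh.SYT) {x1 y1 x2 y2 : ℕ} (h1 : (x1, y1) ∈ sh.cells)
    (h2 : (x2, y2) ∈ sh.cells) (hx : x1 < x2) (hy : y1 < y2) :
    f (x1, y1) + 2 < f (x2, y2) := by
  obtain ⟨hP, hQ⟩ := sh.corner_mem h1 h2 (le_of_lt hx) (le_of_lt hy)
  have l1 : f (x1, y1) < f (x1, y2) := sh.lt_of_row hf h1 hP hy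
  have l2 : f (x1, y2) < f (x2, y2) := sh.lt_of_col hf hP h2 hx
  have l3 : f (x1, y1) < f (x2, y1) := sh.lt_of_col hf h1 hQ hx
  have l4 : f (x2, y1) < f (x2, y2) := sh.lt_of_row hf hQ h2 hy
  have hne : f (x1, y2) ≠ f (x2, y1) := by
    intro h
    have := sh.injOn_of_SYT hf hP hQ h
    simp only [Prod.mk.injEq] at this
    omega
  omega

lemma ct_ne (hf : f ∈ sh.SYT) {b b' : ℕ × ℕ} (h1 : b ∈ sh.cells) (h2 : b' ∈ sh.cells)
    (hne : b ≠ b') (hc1 : f b' ≤ f b + 2) (hc2 : f b ≤ f b' + 2) : ctZ b ≠ ctZ b' := by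
  obtain ⟨x1, y1⟩ := b
  obtain ⟨x2, y2⟩ := b'
  intro hct
  simp only [ctZ] at hct
  rcases Nat.lt_trichotomy x1 x2 with hx | hx | hx
  · have hy : y1 < y2 := by omega
    have := sh.diag_lt hf h1 h2 hx hy
    omega
  · subst hx
    have : y1 = y2 := by omega
    exact hne (by rw [this])
  · have hy : y2 < y1 := by omega
    have := sh.diag_lt hf h2 h1 hx hy
    omega

lemma boxOf_spec (hf : f ∈ sh.SYT) {m : ℕ} (h1 : 1 ≤ m) (h2 : m ≤ sh.nb) :
    sh.boxOf f m ∈ sh.cells ∧ f (sh.boxOf f m) = m := by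
  have hex : ∃ a ∈ (↑sh.cells : Set (ℕ × ℕ)), f a = m := by
    have hm : m ∈ (↑(Finset.Icc 1 sh.nb) : Set ℕ) := by
      simp only [Finset.coe_Icc, Set.mem_Icc]; omega
    obtain ⟨a, ha, hfa⟩ := hf.1.1.2.2 hm
    exact ⟨a, ha, hfa⟩
  exact ⟨Function.invFunOn_mem hex, Function.invFunOn_eq hex⟩

lemma boxOf_eq {g : (ℕ × ℕ) → ℕ} (hinj : Set.InjOn g ↑sh.cells) {b : ℕ × ℕ} {m : ℕ}
    (hb : b ∈ sh.cells) (hm : g b = m) : sh.boxOf g m = b := by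
  have hex : ∃ a ∈ (↑sh.cells : Set (ℕ × ℕ)), g a = m := ⟨b, hb, hm⟩
  exact hinj (Function.invFunOn_mem hex) hb ((Function.invFunOn_eq hex).trans hm.symm)

lemma SYT_val_le (hf : f ∈ sh.SYT) (b : ℕ × ℕ) : f b ≤ sh.nb := by
  by_cases hb : b ∈ sh.cells
  · have := hf.1.1.1 (by exact_mod_cast hb)
    simp only [Finset.coe_Icc, Set.mem_Icc] at this
    exact this.2
  · rw [hf.1.2 b hb]; omega

end SkewShape

/-- `b'` is the box immediately to the right of or immediately below `b`. -/
def BoxAdj (b b' : ℕ × ℕ) : Prop :=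
  (b'.1 = b.1 ∧ b'.2 = b.2 + 1) ∨ (b'.1 = b.1 + 1 ∧ b'.2 = b.2)

lemma BoxAdj.ct {b b' : ℕ × ℕ} (h : BoxAdj b b') :
    ctZ b' = ctZ b + 1 ∨ ctZ b' = ctZ b - 1 := by
  obtain ⟨x, y⟩ := b; obtain ⟨x', y'⟩ := b'
  rcases h with ⟨h1, h2⟩ | ⟨h1, h2⟩ <;> simp only [ctZ] at * <;> [left; right] <;>
    (subst h1; subst h2; push_cast; ring)

lemma BoxAdj.irrefl (b : ℕ × ℕ) : ¬ BoxAdj b b := by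
  rintro (⟨h1, h2⟩ | ⟨h1, h2⟩) <;> omega

namespace SkewShape

variable (sh : SkewShape) {f : (ℕ × ℕ) → ℕ}

lemma adj_lt (hf : f ∈ sh.SYT) {b b' : ℕ × ℕ} (hb : b ∈ sh.cells) (hb' : b' ∈ sh.cells)
    (h : BoxAdj b b') : f b < f b' := by
  obtain ⟨x, y⟩ := b; obtain ⟨x', y'⟩ := b'
  rcases h with ⟨h1, h2⟩ | ⟨h1, h2⟩
  · have hb2 : (x, y + 1) ∈ sh.cells := by
      rw [← show x' = x from h1, ← show y' = y + 1 from h2]; exact hb'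
    have := hf.2.1 x y hb hb2
    rw [show x' = x from h1, show y' = y + 1 from h2]
    exact this
  · have hb2 : (x + 1, y) ∈ sh.cells := by
      rw [← show x' = x + 1 from h1, ← show y' = y from h2]; exact hb'
    have := hf.2.2 x y hb hb2
    rw [show x' = x + 1 from h1, show y' = y from h2]
    exact this

end SkewShape

/-- `π` fixes everything outside of the window `[p, q]`. -/
def FixOut (π : Equiv.Perm ℕ) (p q : ℕ) : Prop := ∀ v, v < p ∨ q < v → π v = v

namespace FixOut

variable {π : Equiv.Perm ℕ} {p q : ℕ}

lemma mem (h : FixOut π p q) {v : ℕ} (h1 : p ≤ v) (h2 : v ≤ q) :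
    p ≤ π v ∧ π v ≤ q := by
  by_contra hc
  have hout : π v < p ∨ q < π v := by omega
  have h3 : π (π v) = π v := h _ hout
  have h4 : π v = v := π.injective h3
  omega

lemma symm (h : FixOut π p q) : FixOut π.symm p q := by
  intro v hv
  rw [Equiv.symm_apply_eq]
  exact (h v hv).symm

end FixOut

namespace SkewShape

variable (sh : SkewShape) {f : (ℕ × ℕ) → ℕ} {π : Equiv.Perm ℕ} {p q : ℕ}

lemma comp_injOn (hf : f ∈ sh.SYT) (π : Equiv.Perm ℕ) : Set.InjOn (⇑π ∘ f) ↑sh.cells :=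
  fun a ha b hb h => sh.injOn_of_SYT hf ha hb (π.injective h)

/-- The key standardness criterion: apply a permutation `π` of a window of values
`[p,q]` to a standard tableau; the result is standard iff `π` respects the order along
all adjacencies between boxes with values in the window. -/
lemma comp_SYT_iff (hf : f ∈ sh.SYT) (hp : 1 ≤ p) (hq : q ≤ sh.nb) (hπ : FixOut π p q) :
    (⇑π ∘ f) ∈ sh.SYT ↔ ∀ v w, p ≤ v → v ≤ q → p ≤ w → w ≤ q →
      BoxAdj (sh.boxOf f v) (sh.boxOf f w) → π v < π w := by
  constructor
  · intro hstd v w hv1 hv2 hw1 hw2 hadj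
    obtain ⟨hbv, hfv⟩ := sh.boxOf_spec hf (by omega) (by omega : v ≤ sh.nb)
    obtain ⟨hbw, hfw⟩ := sh.boxOf_spec hf (by omega) (by omega : w ≤ sh.nb)
    have := sh.adj_lt hstd hbv hbw hadj
    simpa [hfv, hfw] using this
  · intro hcond
    have hIcc : ∀ m, 1 ≤ m → m ≤ sh.nb → 1 ≤ π m ∧ π m ≤ sh.nb := by
      intro m hm1 hm2
      by_cases hw : p ≤ m ∧ m ≤ q
      · have := hπ.mem hw.1 hw.2; omega
      · rw [hπ m (by omega)]; omega
    have key : ∀ c c', c ∈ sh.cells → c' ∈ sh.cells → BoxAdj c c' →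
        π (f c) < π (f c') := by
      intro c c' hc hc' hadj
      have hlt : f c < f c' := sh.adj_lt hf hc hc' hadj
      have hc1 : 1 ≤ f c ∧ f c ≤ sh.nb := by
        have := hf.1.1.1 (by exact_mod_cast hc)
        simpa [Finset.mem_Icc] using this
      have hc'1 : 1 ≤ f c' ∧ f c' ≤ sh.nb := by
        have := hf.1.1.1 (by exact_mod_cast hc')
        simpa [Finset.mem_Icc] using this
      by_cases hcw : p ≤ f c ∧ f c ≤ q <;> by_cases hc'w : p ≤ f c' ∧ f c' ≤ q
      · have e1 : sh.boxOf f (f c) = c := sh.boxOf_eq (sh.injOn_of_SYT hf) hc rfl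
        have e2 : sh.boxOf f (f c') = c' := sh.boxOf_eq (sh.injOn_of_SYT hf) hc' rfl
        apply hcond (f c) (f c') hcw.1 hcw.2 hc'w.1 hc'w.2
        rw [e1, e2]; exact hadj
      · have hgt : q < f c' := by omega
        have := (hπ.mem hcw.1 hcw.2).2
        rw [hπ (f c') (by omega)]
        omega
      · have hlt' : f c < p := by omega
        have := (hπ.mem hc'w.1 hc'w.2).1
        rw [hπ (f c) (by omega)]
        omega
      · rw [hπ (f c) (by omega), hπ (f c') (by omega)]
        exact hlt
    refine ⟨⟨⟨?_, ?_, ?_⟩, ?_⟩, ?_, ?_⟩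
    · intro b hb
      have hfb := hf.1.1.1 hb
      simp only [Finset.coe_Icc, Set.mem_Icc] at hfb ⊢
      exact hIcc (f b) hfb.1 hfb.2
    · exact sh.comp_injOn hf π
    · intro m hm
      simp only [Finset.coe_Icc, Set.mem_Icc] at hm
      have hm' : 1 ≤ π.symm m ∧ π.symm m ≤ sh.nb := by
        by_cases hw : p ≤ m ∧ m ≤ q
        · have := hπ.symm.mem hw.1 hw.2; omega
        · rw [hπ.symm m (by omega)]; omega
      obtain ⟨b, hb, hfb⟩ := hf.1.1.2.2 (by
        simp only [Finset.coe_Icc, Set.mem_Icc]; exact hm' : π.symm m ∈ (↑(Finset.Icc 1 sh.nb) : Set ℕ))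
      exact ⟨b, hb, by simp [Function.comp, hfb]⟩
    · intro b hb
      simp only [Function.comp_apply, hf.1.2 b hb]
      exact hπ 0 (by omega)
    · intro x y h1 h2
      exact key (x, y) (x, y + 1) h1 h2 (Or.inl ⟨rfl, rfl⟩)
    · intro x y h1 h2
      exact key (x, y) (x + 1, y) h1 h2 (Or.inr ⟨rfl, rfl⟩)

end SkewShape

end AuxProofs
/-! ### Operator infrastructure -/

namespace SkewShape

variable (sh : SkewShape) {f g : (ℕ × ℕ) → ℕ} {i j : ℕ}

lemma vOf_of_mem (h : f ∈ sh.SYT) : sh.vOf f = Finsupp.single ⟨f, h⟩ 1 := dif_pos h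

lemma vOf_of_not_mem (h : f ∉ sh.SYT) : sh.vOf f = 0 := dif_neg h

lemma vOf_coe (T : sh.SYTt) : sh.vOf T.1 = Finsupp.single T 1 := dif_pos T.2

lemma semiOp_vOf (i : ℕ) (h : f ∈ sh.SYT) :
    sh.semiOp i (sh.vOf f) =
      sh.aI f i • sh.vOf f + (1 + sh.aI f i) • sh.vOf (sApply i f) := by
  have hv : sh.vOf f = Finsupp.single ⟨f, h⟩ 1 := dif_pos h
  conv_lhs => rw [hv]
  rw [semiOp]
  erw [Finsupp.lsum_single]
  rw [LinearMap.toSpanSingleton_apply, one_smul]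

lemma lhom_ext_vOf {φ ψ : (sh.SYTt →₀ ℂ) →ₗ[ℂ] (sh.SYTt →₀ ℂ)}
    (h : ∀ f, f ∈ sh.SYT → φ (sh.vOf f) = ψ (sh.vOf f)) : φ = ψ := by
  apply Finsupp.lhom_ext
  intro T c
  have hs : (Finsupp.single T c : sh.SYTt →₀ ℂ) = c • sh.vOf T.1 := by
    rw [sh.vOf_coe, Finsupp.smul_single, smul_eq_mul, mul_one]
  rw [hs, map_smul, map_smul, h T.1 T.2]

lemma opWord_append (l1 l2 : List ℕ) :
    sh.opWord (l1 ++ l2) = sh.opWord l1 ∘ₗ sh.opWord l2 := by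
  induction l1 with
  | nil => simp [opWord]
  | cons i l ih =>
    simp only [List.cons_append, opWord, List.append_eq, ih, LinearMap.comp_assoc]

end SkewShape

/-! ### sApply lemmas -/

lemma sApply_sApply (i : ℕ) (f : (ℕ × ℕ) → ℕ) : sApply i (sApply i f) = f :=
  funext fun b => Equiv.swap_apply_self _ _ _

lemma sApply_comp_eq (i : ℕ) (f : (ℕ × ℕ) → ℕ) :
    sApply i f = ⇑(Equiv.swap i (i + 1)) ∘ f := rfl

lemma sApply_sApply_comp (i j : ℕ) (f : (ℕ × ℕ) → ℕ) :
    sApply i (sApply j f) = ⇑(Equiv.swap i (i + 1) * Equiv.swap j (j + 1)) ∘ f := rfl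

lemma sApply_sApply_sApply_comp (i j k : ℕ) (f : (ℕ × ℕ) → ℕ) :
    sApply i (sApply j (sApply k f)) =
      ⇑(Equiv.swap i (i + 1) * (Equiv.swap j (j + 1) * Equiv.swap k (k + 1))) ∘ f := rfl

set_option maxHeartbeats 1000000 in
lemma swap_braid (i : ℕ) :
    Equiv.swap i (i + 1) * (Equiv.swap (i + 1) (i + 2) * Equiv.swap i (i + 1)) =
      Equiv.swap (i + 1) (i + 2) * (Equiv.swap i (i + 1) * Equiv.swap (i + 1) (i + 2)) := by
  ext v
  simp only [Equiv.Perm.mul_apply, Equiv.swap_apply_def]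
  split_ifs <;> omega

lemma swap_commute {i j : ℕ} (h : i + 2 ≤ j) :
    Equiv.swap i (i + 1) * Equiv.swap j (j + 1) =
      Equiv.swap j (j + 1) * Equiv.swap i (i + 1) := by
  ext v
  simp only [Equiv.Perm.mul_apply, Equiv.swap_apply_def]
  split_ifs <;> omega

lemma sApply_comm {i j : ℕ} (h : i + 2 ≤ j) (f : (ℕ × ℕ) → ℕ) :
    sApply j (sApply i f) = sApply i (sApply j f) := by
  rw [sApply_sApply_comp, sApply_sApply_comp, ← swap_commute h]

lemma sApply_braid (i : ℕ) (f : (ℕ × ℕ) → ℕ) :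
    sApply (i + 1) (sApply i (sApply (i + 1) f)) =
      sApply i (sApply (i + 1) (sApply i f)) := by
  rw [sApply_sApply_sApply_comp, sApply_sApply_sApply_comp, ← swap_braid]

lemma fixout_swap (i : ℕ) : FixOut (Equiv.swap i (i + 1)) i (i + 1) :=
  fun _ hv => Equiv.swap_apply_of_ne_of_ne (by omega) (by omega)

namespace SkewShape

variable (sh : SkewShape) {f : (ℕ × ℕ) → ℕ} {i j : ℕ}

lemma adj_val_lt (hf : f ∈ sh.SYT) {v w : ℕ} (hv1 : 1 ≤ v) (hv2 : v ≤ sh.nb)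
    (hw1 : 1 ≤ w) (hw2 : w ≤ sh.nb)
    (hadj : BoxAdj (sh.boxOf f v) (sh.boxOf f w)) : v < w := by
  obtain ⟨hbv, hfv⟩ := sh.boxOf_spec hf hv1 hv2
  obtain ⟨hbw, hfw⟩ := sh.boxOf_spec hf hw1 hw2
  have := sh.adj_lt hf hbv hbw hadj
  omega

lemma sApply_SYT_iff (hf : f ∈ sh.SYT) (h1 : 1 ≤ i) (h2 : i + 1 ≤ sh.nb) :
    sApply i f ∈ sh.SYT ↔ ¬BoxAdj (sh.boxOf f i) (sh.boxOf f (i + 1)) := by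
  rw [sApply_comp_eq, sh.comp_SYT_iff hf h1 h2 (fixout_swap i)]
  constructor
  · intro hcond hadj
    have := hcond i (i + 1) le_rfl (by omega) (by omega) le_rfl hadj
    rw [Equiv.swap_apply_left, Equiv.swap_apply_right] at this
    omega
  · intro hnadj v w hv1 hv2 hw1 hw2 hadj
    have hvw : v < w := sh.adj_val_lt hf (by omega) (by omega) (by omega) (by omega) hadj
    have hv : v = i := by omega
    have hw : w = i + 1 := by omega
    subst hv; subst hw
    exact absurd hadj hnadj

/-! ### Trivial letters -/

lemma boxOf_high (hf : f ∈ sh.SYT) {m m' : ℕ} (hm : sh.nb < m) (hm' : sh.nb < m') :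
    sh.boxOf f m = sh.boxOf f m' := by
  have hno : ∀ k, sh.nb < k → ¬∃ a ∈ (↑sh.cells : Set (ℕ × ℕ)), f a = k := by
    rintro k hk ⟨a, _, hfa⟩
    have := sh.SYT_val_le hf a
    omega
  rw [boxOf, boxOf, Function.invFunOn_neg (hno m hm), Function.invFunOn_neg (hno m' hm')]

lemma aI_triv (hf : f ∈ sh.SYT) (hn : sh.nb + 1 ≤ i) : sh.aI f i = 0 := by
  rw [aI, aIJ, sh.boxOf_high hf (by omega : sh.nb < i + 1) (by omega : sh.nb < i), sub_self,
    div_zero]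

lemma sApply_triv (hf : f ∈ sh.SYT) (hn : sh.nb + 1 ≤ i) : sApply i f = f := by
  funext b
  have := sh.SYT_val_le hf b
  exact Equiv.swap_apply_of_ne_of_ne (by omega) (by omega)

lemma semiOp_triv (hn : sh.nb + 1 ≤ i) : sh.semiOp i = LinearMap.id := by
  apply sh.lhom_ext_vOf
  intro f hf
  rw [sh.semiOp_vOf i hf, sh.aI_triv hf hn, sh.sApply_triv hf hn, LinearMap.id_apply]
  simp

/-! ### The involution relation -/

lemma semiOp_invol (h1 : 1 ≤ i) (h2 : i + 1 ≤ sh.nb) :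
    sh.semiOp i ∘ₗ sh.semiOp i = LinearMap.id := by
  apply sh.lhom_ext_vOf
  intro f hf
  obtain ⟨hb1, hf1⟩ := sh.boxOf_spec hf (by omega : 1 ≤ i) (by omega)
  obtain ⟨hb2, hf2⟩ := sh.boxOf_spec hf (by omega : 1 ≤ i + 1) h2
  have hbne : sh.boxOf f i ≠ sh.boxOf f (i + 1) := by
    intro h; rw [h, hf2] at hf1; omega
  have hctne : ctZ (sh.boxOf f i) ≠ ctZ (sh.boxOf f (i + 1)) :=
    sh.ct_ne hf hb1 hb2 hbne (by omega) (by omega)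
  set c1 : ℂ := ((ctZ (sh.boxOf f i) : ℤ) : ℂ) with hc1
  set c2 : ℂ := ((ctZ (sh.boxOf f (i + 1)) : ℤ) : ℂ) with hc2
  have hcne : c2 - c1 ≠ 0 := by
    rw [hc1, hc2, sub_ne_zero]
    exact_mod_cast hctne.symm
  have hcne' : c1 - c2 ≠ 0 := fun h => hcne (by linear_combination -h)
  have ha : sh.aI f i = 1 / (c2 - c1) := rfl
  rw [LinearMap.comp_apply, LinearMap.id_apply, sh.semiOp_vOf i hf]
  by_cases hs : sApply i f ∈ sh.SYT
  · have hinj : Set.InjOn (sApply i f) ↑sh.cells := by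
      rw [sApply_comp_eq]; exact sh.comp_injOn hf _
    have e1 : sh.boxOf (sApply i f) i = sh.boxOf f (i + 1) :=
      sh.boxOf_eq hinj hb2 (by rw [sApply, hf2, Equiv.swap_apply_right])
    have e2 : sh.boxOf (sApply i f) (i + 1) = sh.boxOf f i :=
      sh.boxOf_eq hinj hb1 (by rw [sApply, hf1, Equiv.swap_apply_left])
    have ha' : sh.aI (sApply i f) i = 1 / (c1 - c2) := by
      rw [aI, aIJ, e1, e2]
    rw [map_add, map_smul, map_smul, sh.semiOp_vOf i hs, sh.semiOp_vOf i hf, sApply_sApply,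
      ha', ha]
    match_scalars
    · field_simp
      ring
    · field_simp
      ring
  · have hadj : BoxAdj (sh.boxOf f i) (sh.boxOf f (i + 1)) := by
      by_contra h
      exact hs ((sh.sApply_SYT_iff hf h1 h2).2 h)
    rw [sh.vOf_of_not_mem hs, smul_zero, add_zero, map_smul, sh.semiOp_vOf i hf,
      sh.vOf_of_not_mem hs, smul_zero, add_zero, smul_smul, ha]
    rcases hadj.ct with hce | hce
    · have hcc : c2 = c1 + 1 := by
        rw [hc1, hc2]; exact_mod_cast congrArg (Int.cast : ℤ → ℂ) hce
      rw [hcc]; norm_num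
    · have hcc : c2 = c1 - 1 := by
        rw [hc1, hc2]; exact_mod_cast congrArg (Int.cast : ℤ → ℂ) hce
      rw [hcc]; norm_num

end SkewShape
namespace SkewShape

variable (sh : SkewShape) {f : (ℕ × ℕ) → ℕ} {i j : ℕ}

/-! ### The commutation relation -/

lemma semiOp_comm (h1 : 1 ≤ i) (hij : i + 2 ≤ j) (hjn : j + 1 ≤ sh.nb) :
    sh.semiOp i ∘ₗ sh.semiOp j = sh.semiOp j ∘ₗ sh.semiOp i := by
  apply sh.lhom_ext_vOf
  intro f hf
  obtain ⟨hbi, hfi⟩ := sh.boxOf_spec hf (by omega : 1 ≤ i) (by omega)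
  obtain ⟨hbi', hfi'⟩ := sh.boxOf_spec hf (by omega : 1 ≤ i + 1) (by omega)
  obtain ⟨hbj, hfj⟩ := sh.boxOf_spec hf (by omega : 1 ≤ j) (by omega)
  obtain ⟨hbj', hfj'⟩ := sh.boxOf_spec hf (by omega : 1 ≤ j + 1) (by omega)
  have memS := sh.sApply_SYT_iff hf (by omega : 1 ≤ i) (by omega : i + 1 ≤ sh.nb)
  have memT := sh.sApply_SYT_iff hf (by omega : 1 ≤ j) (by omega : j + 1 ≤ sh.nb)
  have hcommf : sApply j (sApply i f) = sApply i (sApply j f) := sApply_comm hij f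
  have hval : ∀ x, (Equiv.swap i (i + 1) * Equiv.swap j (j + 1)) x =
      if x = i then i + 1 else if x = i + 1 then i else
        if x = j then j + 1 else if x = j + 1 then j else x := by
    intro x
    simp only [Equiv.Perm.mul_apply, Equiv.swap_apply_def]
    split_ifs <;> omega
  have hfix : FixOut (Equiv.swap i (i + 1) * Equiv.swap j (j + 1)) i (j + 1) := by
    intro v hv
    rw [hval]
    split_ifs <;> omega
  have memST : sApply i (sApply j f) ∈ sh.SYT ↔
      (¬BoxAdj (sh.boxOf f i) (sh.boxOf f (i + 1)) ∧
        ¬BoxAdj (sh.boxOf f j) (sh.boxOf f (j + 1))) := by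
    rw [sApply_sApply_comp, sh.comp_SYT_iff hf (by omega : 1 ≤ i) hjn hfix]
    constructor
    · intro hcond
      constructor
      · intro hadj
        have := hcond i (i + 1) le_rfl (by omega) (by omega) (by omega) hadj
        rw [hval, hval] at this
        split_ifs at this <;> omega
      · intro hadj
        have := hcond j (j + 1) (by omega) (by omega) (by omega) le_rfl hadj
        rw [hval, hval] at this
        split_ifs at this <;> omega
    · rintro ⟨hA, hB⟩ v w hv1 hv2 hw1 hw2 hadj
      have hvw : v < w := sh.adj_val_lt hf (by omega) (by omega) (by omega) (by omega) hadj
      by_cases hsp1 : v = i ∧ w = i + 1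
      · obtain ⟨rfl, rfl⟩ := hsp1
        exact absurd hadj hA
      by_cases hsp2 : v = j ∧ w = j + 1
      · obtain ⟨rfl, rfl⟩ := hsp2
        exact absurd hadj hB
      rw [hval, hval]
      split_ifs <;> omega
  have hinjS : Set.InjOn (sApply i f) ↑sh.cells := by
    rw [sApply_comp_eq]; exact sh.comp_injOn hf _
  have hinjT : Set.InjOn (sApply j f) ↑sh.cells := by
    rw [sApply_comp_eq]; exact sh.comp_injOn hf _
  have eTi : sh.boxOf (sApply j f) i = sh.boxOf f i :=
    sh.boxOf_eq hinjT hbi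
      (by simp only [sApply, hfi]; exact Equiv.swap_apply_of_ne_of_ne (by omega) (by omega))
  have eTi' : sh.boxOf (sApply j f) (i + 1) = sh.boxOf f (i + 1) :=
    sh.boxOf_eq hinjT hbi'
      (by simp only [sApply, hfi']; exact Equiv.swap_apply_of_ne_of_ne (by omega) (by omega))
  have eSj : sh.boxOf (sApply i f) j = sh.boxOf f j :=
    sh.boxOf_eq hinjS hbj
      (by simp only [sApply, hfj]; exact Equiv.swap_apply_of_ne_of_ne (by omega) (by omega))
  have eSj' : sh.boxOf (sApply i f) (j + 1) = sh.boxOf f (j + 1) :=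
    sh.boxOf_eq hinjS hbj'
      (by simp only [sApply, hfj']; exact Equiv.swap_apply_of_ne_of_ne (by omega) (by omega))
  have haTi : sh.aI (sApply j f) i = sh.aI f i := by
    rw [aI, aIJ, aI, aIJ, eTi, eTi']
  have haSj : sh.aI (sApply i f) j = sh.aI f j := by
    rw [aI, aIJ, aI, aIJ, eSj, eSj']
  rw [LinearMap.comp_apply, LinearMap.comp_apply]
  by_cases hA : BoxAdj (sh.boxOf f i) (sh.boxOf f (i + 1)) <;>
    by_cases hB : BoxAdj (sh.boxOf f j) (sh.boxOf f (j + 1))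
  · have hsf0 : sh.vOf (sApply i f) = 0 := sh.vOf_of_not_mem (fun hm => (memS.mp hm) hA)
    have htf0 : sh.vOf (sApply j f) = 0 := sh.vOf_of_not_mem (fun hm => (memT.mp hm) hB)
    simp only [sh.semiOp_vOf j hf, sh.semiOp_vOf i hf, hsf0, htf0, map_add, map_smul,
      smul_zero, add_zero, zero_add, map_zero, smul_smul]
    match_scalars <;> ring
  · have hsf0 : sh.vOf (sApply i f) = 0 := sh.vOf_of_not_mem (fun hm => (memS.mp hm) hA)
    have htf : sApply j f ∈ sh.SYT := memT.mpr hB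
    have hst0 : sh.vOf (sApply i (sApply j f)) = 0 :=
      sh.vOf_of_not_mem (fun hm => (memST.mp hm).1 hA)
    simp only [sh.semiOp_vOf j hf, sh.semiOp_vOf i hf, sh.semiOp_vOf i htf, haTi, hsf0, hst0,
      map_add, map_smul, smul_zero, add_zero, zero_add, map_zero, smul_smul]
    match_scalars <;> ring
  · have htf0 : sh.vOf (sApply j f) = 0 := sh.vOf_of_not_mem (fun hm => (memT.mp hm) hB)
    have hsf : sApply i f ∈ sh.SYT := memS.mpr hA
    have hts0 : sh.vOf (sApply j (sApply i f)) = 0 := by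
      rw [hcommf]
      exact sh.vOf_of_not_mem (fun hm => (memST.mp hm).2 hB)
    simp only [sh.semiOp_vOf j hf, sh.semiOp_vOf i hf, sh.semiOp_vOf j hsf, haSj, htf0, hts0,
      map_add, map_smul, smul_zero, add_zero, zero_add, map_zero, smul_smul]
    match_scalars <;> ring
  · have hsf : sApply i f ∈ sh.SYT := memS.mpr hA
    have htf : sApply j f ∈ sh.SYT := memT.mpr hB
    have hst : sApply i (sApply j f) ∈ sh.SYT := memST.mpr ⟨hA, hB⟩
    have hts : sApply j (sApply i f) ∈ sh.SYT := by rw [hcommf]; exact hst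
    simp only [sh.semiOp_vOf j hf, sh.semiOp_vOf i hf, sh.semiOp_vOf i htf,
      sh.semiOp_vOf j hsf, haTi, haSj, hcommf, map_add, map_smul, smul_smul]
    match_scalars <;> ring

end SkewShape
namespace SkewShape

variable (sh : SkewShape) {i : ℕ}

set_option maxHeartbeats 3200000 in
/-- The braid relation for seminormal operators. -/
lemma semiOp_braid (h1 : 1 ≤ i) (h2 : i + 2 ≤ sh.nb) :
    sh.semiOp i ∘ₗ (sh.semiOp (i + 1) ∘ₗ sh.semiOp i) =
      sh.semiOp (i + 1) ∘ₗ (sh.semiOp i ∘ₗ sh.semiOp (i + 1)) := by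
  apply sh.lhom_ext_vOf
  intro f hf
  obtain ⟨hb1, hf1⟩ := sh.boxOf_spec hf (by omega : 1 ≤ i) (by omega)
  obtain ⟨hb2, hf2⟩ := sh.boxOf_spec hf (by omega : 1 ≤ i + 1) (by omega)
  obtain ⟨hb3, hf3⟩ := sh.boxOf_spec hf (by omega : 1 ≤ i + 2) (by omega)
  have hne12 : sh.boxOf f i ≠ sh.boxOf f (i + 1) := fun h => by rw [h, hf2] at hf1; omega
  have hne23 : sh.boxOf f (i + 1) ≠ sh.boxOf f (i + 2) := fun h => by rw [h, hf3] at hf2; omega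
  have hne13 : sh.boxOf f i ≠ sh.boxOf f (i + 2) := fun h => by rw [h, hf3] at hf1; omega
  have hz12 : ctZ (sh.boxOf f i) ≠ ctZ (sh.boxOf f (i + 1)) :=
    sh.ct_ne hf hb1 hb2 hne12 (by omega) (by omega)
  have hz23 : ctZ (sh.boxOf f (i + 1)) ≠ ctZ (sh.boxOf f (i + 2)) :=
    sh.ct_ne hf hb2 hb3 hne23 (by omega) (by omega)
  have hz13 : ctZ (sh.boxOf f i) ≠ ctZ (sh.boxOf f (i + 2)) :=
    sh.ct_ne hf hb1 hb3 hne13 (by omega) (by omega)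
  -- membership criterion
  have crit : ∀ π : Equiv.Perm ℕ, FixOut π i (i + 2) → ((⇑π ∘ f) ∈ sh.SYT ↔
      ((BoxAdj (sh.boxOf f i) (sh.boxOf f (i + 1)) → π i < π (i + 1)) ∧
       (BoxAdj (sh.boxOf f (i + 1)) (sh.boxOf f (i + 2)) → π (i + 1) < π (i + 2)) ∧
       (BoxAdj (sh.boxOf f i) (sh.boxOf f (i + 2)) → π i < π (i + 2)))) := by
    intro π hπ
    rw [sh.comp_SYT_iff hf (by omega) (by omega) hπ]
    constructor
    · intro hcond
      exact ⟨fun h => hcond i (i + 1) le_rfl (by omega) (by omega) (by omega) h,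
             fun h => hcond (i + 1) (i + 2) (by omega) (by omega) (by omega) (by omega) h,
             fun h => hcond i (i + 2) le_rfl (by omega) (by omega) (by omega) h⟩
    · rintro ⟨hx, hy, hz⟩ v w hv1 hv2 hw1 hw2 hadj
      have hvw : v < w := sh.adj_val_lt hf (by omega) (by omega) (by omega) (by omega) hadj
      rcases (by omega : (v = i ∧ w = i + 1) ∨ (v = i + 1 ∧ w = i + 2) ∨ (v = i ∧ w = i + 2))
        with ⟨rfl, rfl⟩ | ⟨rfl, rfl⟩ | ⟨rfl, rfl⟩
      · exact hx hadj
      · exact hy hadj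
      · exact hz hadj
  -- memberships of the six fillings
  have memS : sApply i f ∈ sh.SYT ↔ ¬BoxAdj (sh.boxOf f i) (sh.boxOf f (i + 1)) :=
    sh.sApply_SYT_iff hf (by omega) (by omega)
  have memT : sApply (i + 1) f ∈ sh.SYT ↔
      ¬BoxAdj (sh.boxOf f (i + 1)) (sh.boxOf f (i + 2)) :=
    sh.sApply_SYT_iff hf (by omega) (by omega : (i + 1) + 1 ≤ sh.nb)
  have fixST : FixOut (Equiv.swap i (i + 1) * Equiv.swap (i + 1) (i + 1 + 1)) i (i + 2) := by
    intro v hv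
    simp only [Equiv.Perm.mul_apply, Equiv.swap_apply_def]
    split_ifs <;> omega
  have memST : sApply i (sApply (i + 1) f) ∈ sh.SYT ↔
      (¬BoxAdj (sh.boxOf f (i + 1)) (sh.boxOf f (i + 2)) ∧
        ¬BoxAdj (sh.boxOf f i) (sh.boxOf f (i + 2))) := by
    rw [sApply_sApply_comp, crit _ fixST]
    have v1 : (Equiv.swap i (i + 1) * Equiv.swap (i + 1) (i + 1 + 1)) i = i + 1 := by
      simp only [Equiv.Perm.mul_apply, Equiv.swap_apply_def]; split_ifs <;> omega
    have v2 : (Equiv.swap i (i + 1) * Equiv.swap (i + 1) (i + 1 + 1)) (i + 1) = i + 2 := by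
      simp only [Equiv.Perm.mul_apply, Equiv.swap_apply_def]; split_ifs <;> omega
    have v3 : (Equiv.swap i (i + 1) * Equiv.swap (i + 1) (i + 1 + 1)) (i + 2) = i := by
      simp only [Equiv.Perm.mul_apply, Equiv.swap_apply_def]; split_ifs <;> omega
    rw [v1, v2, v3]
    constructor
    · rintro ⟨-, hy, hz⟩
      exact ⟨fun h => by have := hy h; omega, fun h => by have := hz h; omega⟩
    · rintro ⟨hB', hC'⟩
      exact ⟨fun _ => by omega, fun h => absurd h hB', fun h => absurd h hC'⟩
  have fixTS : FixOut (Equiv.swap (i + 1) (i + 1 + 1) * Equiv.swap i (i + 1)) i (i + 2) := by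
    intro v hv
    simp only [Equiv.Perm.mul_apply, Equiv.swap_apply_def]
    split_ifs <;> omega
  have memTS : sApply (i + 1) (sApply i f) ∈ sh.SYT ↔
      (¬BoxAdj (sh.boxOf f i) (sh.boxOf f (i + 1)) ∧
        ¬BoxAdj (sh.boxOf f i) (sh.boxOf f (i + 2))) := by
    rw [sApply_sApply_comp, crit _ fixTS]
    have v1 : (Equiv.swap (i + 1) (i + 1 + 1) * Equiv.swap i (i + 1)) i = i + 2 := by
      simp only [Equiv.Perm.mul_apply, Equiv.swap_apply_def]; split_ifs <;> omega
    have v2 : (Equiv.swap (i + 1) (i + 1 + 1) * Equiv.swap i (i + 1)) (i + 1) = i := by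
      simp only [Equiv.Perm.mul_apply, Equiv.swap_apply_def]; split_ifs <;> omega
    have v3 : (Equiv.swap (i + 1) (i + 1 + 1) * Equiv.swap i (i + 1)) (i + 2) = i + 1 := by
      simp only [Equiv.Perm.mul_apply, Equiv.swap_apply_def]; split_ifs <;> omega
    rw [v1, v2, v3]
    constructor
    · rintro ⟨hx, -, hz⟩
      exact ⟨fun h => by have := hx h; omega, fun h => by have := hz h; omega⟩
    · rintro ⟨hA', hC'⟩
      exact ⟨fun h => absurd h hA', fun _ => by omega, fun h => absurd h hC'⟩
  have fixSTS : FixOut (Equiv.swap i (i + 1) *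
      (Equiv.swap (i + 1) (i + 1 + 1) * Equiv.swap i (i + 1))) i (i + 2) := by
    intro v hv
    simp only [Equiv.Perm.mul_apply, Equiv.swap_apply_def]
    split_ifs <;> omega
  have memSTS : sApply i (sApply (i + 1) (sApply i f)) ∈ sh.SYT ↔
      (¬BoxAdj (sh.boxOf f i) (sh.boxOf f (i + 1)) ∧
        ¬BoxAdj (sh.boxOf f (i + 1)) (sh.boxOf f (i + 2)) ∧
        ¬BoxAdj (sh.boxOf f i) (sh.boxOf f (i + 2))) := by
    rw [sApply_sApply_sApply_comp, crit _ fixSTS]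
    have v1 : (Equiv.swap i (i + 1) *
        (Equiv.swap (i + 1) (i + 1 + 1) * Equiv.swap i (i + 1))) i = i + 2 := by
      simp only [Equiv.Perm.mul_apply, Equiv.swap_apply_def]; split_ifs <;> omega
    have v2 : (Equiv.swap i (i + 1) *
        (Equiv.swap (i + 1) (i + 1 + 1) * Equiv.swap i (i + 1))) (i + 1) = i + 1 := by
      simp only [Equiv.Perm.mul_apply, Equiv.swap_apply_def]; split_ifs <;> omega
    have v3 : (Equiv.swap i (i + 1) *
        (Equiv.swap (i + 1) (i + 1 + 1) * Equiv.swap i (i + 1))) (i + 2) = i := by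
      simp only [Equiv.Perm.mul_apply, Equiv.swap_apply_def]; split_ifs <;> omega
    rw [v1, v2, v3]
    constructor
    · rintro ⟨hx, hy, hz⟩
      exact ⟨fun h => by have := hx h; omega, fun h => by have := hy h; omega,
        fun h => by have := hz h; omega⟩
    · rintro ⟨hA', hB', hC'⟩
      exact ⟨fun h => absurd h hA', fun h => absurd h hB', fun h => absurd h hC'⟩
  -- boxOf computations
  have hinjS : Set.InjOn (sApply i f) ↑sh.cells := by
    rw [sApply_comp_eq]; exact sh.comp_injOn hf _
  have hinjT : Set.InjOn (sApply (i + 1) f) ↑sh.cells := by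
    rw [sApply_comp_eq]; exact sh.comp_injOn hf _
  have hinjST : Set.InjOn (sApply i (sApply (i + 1) f)) ↑sh.cells := by
    rw [sApply_sApply_comp]; exact sh.comp_injOn hf _
  have hinjTS : Set.InjOn (sApply (i + 1) (sApply i f)) ↑sh.cells := by
    rw [sApply_sApply_comp]; exact sh.comp_injOn hf _
  have e_sf_1 : sh.boxOf (sApply i f) i = sh.boxOf f (i + 1) :=
    sh.boxOf_eq hinjS hb2
      (by simp only [sApply, hf2, Equiv.swap_apply_def]; split_ifs <;> omega)
  have e_sf_2 : sh.boxOf (sApply i f) (i + 1) = sh.boxOf f i :=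
    sh.boxOf_eq hinjS hb1
      (by simp only [sApply, hf1, Equiv.swap_apply_def]; split_ifs <;> omega)
  have e_sf_3 : sh.boxOf (sApply i f) (i + 2) = sh.boxOf f (i + 2) :=
    sh.boxOf_eq hinjS hb3
      (by simp only [sApply, hf3, Equiv.swap_apply_def]; split_ifs <;> omega)
  have e_tf_1 : sh.boxOf (sApply (i + 1) f) i = sh.boxOf f i :=
    sh.boxOf_eq hinjT hb1
      (by simp only [sApply, hf1, Equiv.swap_apply_def]; split_ifs <;> omega)
  have e_tf_2 : sh.boxOf (sApply (i + 1) f) (i + 1) = sh.boxOf f (i + 2) :=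
    sh.boxOf_eq hinjT hb3
      (by simp only [sApply, hf3, Equiv.swap_apply_def]; split_ifs <;> omega)
  have e_tf_3 : sh.boxOf (sApply (i + 1) f) (i + 2) = sh.boxOf f (i + 1) :=
    sh.boxOf_eq hinjT hb2
      (by simp only [sApply, hf2, Equiv.swap_apply_def]; split_ifs <;> omega)
  have e_tsf_1 : sh.boxOf (sApply (i + 1) (sApply i f)) i = sh.boxOf f (i + 1) :=
    sh.boxOf_eq hinjTS hb2
      (by simp only [sApply, hf2, Equiv.swap_apply_def]; split_ifs <;> omega)
  have e_tsf_2 : sh.boxOf (sApply (i + 1) (sApply i f)) (i + 1) = sh.boxOf f (i + 2) :=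
    sh.boxOf_eq hinjTS hb3
      (by simp only [sApply, hf3, Equiv.swap_apply_def]; split_ifs <;> omega)
  have e_stf_2 : sh.boxOf (sApply i (sApply (i + 1) f)) (i + 1) = sh.boxOf f i :=
    sh.boxOf_eq hinjST hb1
      (by simp only [sApply, hf1, Equiv.swap_apply_def]; split_ifs <;> omega)
  have e_stf_3 : sh.boxOf (sApply i (sApply (i + 1) f)) (i + 2) = sh.boxOf f (i + 1) :=
    sh.boxOf_eq hinjST hb2
      (by simp only [sApply, hf2, Equiv.swap_apply_def]; split_ifs <;> omega)
  -- contents as complex numbers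
  set c1 : ℂ := ((ctZ (sh.boxOf f i) : ℤ) : ℂ) with hc1def
  set c2 : ℂ := ((ctZ (sh.boxOf f (i + 1)) : ℤ) : ℂ) with hc2def
  set c3 : ℂ := ((ctZ (sh.boxOf f (i + 2)) : ℤ) : ℂ) with hc3def
  have hC12 : c1 ≠ c2 := by rw [hc1def, hc2def]; exact_mod_cast hz12
  have hC23 : c2 ≠ c3 := by rw [hc2def, hc3def]; exact_mod_cast hz23
  have hC13 : c1 ≠ c3 := by rw [hc1def, hc3def]; exact_mod_cast hz13
  have h21 : c2 - c1 ≠ 0 := sub_ne_zero.2 hC12.symm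
  have h12 : c1 - c2 ≠ 0 := sub_ne_zero.2 hC12
  have h32 : c3 - c2 ≠ 0 := sub_ne_zero.2 hC23.symm
  have h23 : c2 - c3 ≠ 0 := sub_ne_zero.2 hC23
  have h31 : c3 - c1 ≠ 0 := sub_ne_zero.2 hC13.symm
  have h13 : c1 - c3 ≠ 0 := sub_ne_zero.2 hC13
  -- aI values
  have ha_f_i : sh.aI f i = 1 / (c2 - c1) := rfl
  have ha_f_i1 : sh.aI f (i + 1) = 1 / (c3 - c2) := rfl
  have ha_sf_i : sh.aI (sApply i f) i = 1 / (c1 - c2) := by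
    rw [aI, aIJ, e_sf_2, e_sf_1]
  have ha_sf_i1 : sh.aI (sApply i f) (i + 1) = 1 / (c3 - c1) := by
    rw [aI, aIJ, e_sf_3, e_sf_2]
  have ha_tf_i : sh.aI (sApply (i + 1) f) i = 1 / (c3 - c1) := by
    rw [aI, aIJ, e_tf_2, e_tf_1]
  have ha_tf_i1 : sh.aI (sApply (i + 1) f) (i + 1) = 1 / (c2 - c3) := by
    rw [aI, aIJ, e_tf_3, e_tf_2]
  have ha_tsf_i : sh.aI (sApply (i + 1) (sApply i f)) i = 1 / (c3 - c2) := by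
    rw [aI, aIJ, e_tsf_2, e_tsf_1]
  have ha_stf_i1 : sh.aI (sApply i (sApply (i + 1) f)) (i + 1) = 1 / (c2 - c1) := by
    rw [aI, aIJ, e_stf_3, e_stf_2]
  rw [LinearMap.comp_apply, LinearMap.comp_apply, LinearMap.comp_apply, LinearMap.comp_apply]
  by_cases hA : BoxAdj (sh.boxOf f i) (sh.boxOf f (i + 1)) <;>
    by_cases hB : BoxAdj (sh.boxOf f (i + 1)) (sh.boxOf f (i + 2)) <;>
    by_cases hC : BoxAdj (sh.boxOf f i) (sh.boxOf f (i + 2))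
  -- case A B C : impossible
  · exfalso
    rcases hA.ct with h | h <;> rcases hB.ct with h' | h' <;> rcases hC.ct with h'' | h'' <;>
      omega
  -- case A B ¬C
  · have z_sf : sh.vOf (sApply i f) = 0 := sh.vOf_of_not_mem fun hm => (memS.mp hm) hA
    have z_tf : sh.vOf (sApply (i + 1) f) = 0 := sh.vOf_of_not_mem fun hm => (memT.mp hm) hB
    simp only [sh.semiOp_vOf i hf, sh.semiOp_vOf (i + 1) hf, z_sf, z_tf, ha_f_i, ha_f_i1,
      map_add, map_smul, smul_zero, add_zero, zero_add, map_zero, smul_smul]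
    rcases hA.ct with h | h <;> rcases hB.ct with h' | h'
    · have hcc2 : c2 = c1 + 1 := by rw [hc1def, hc2def]; exact_mod_cast h
      have hcc3 : c3 = c2 + 1 := by rw [hc2def, hc3def]; exact_mod_cast h'
      rw [hcc2] at hcc3 ⊢
      rw [hcc3]
      match_scalars
      field_simp
      ring
    · exfalso; omega
    · exfalso; omega
    · have hcc2 : c2 = c1 - 1 := by rw [hc1def, hc2def]; exact_mod_cast h
      have hcc3 : c3 = c2 - 1 := by rw [hc2def, hc3def]; exact_mod_cast h'
      rw [hcc2] at hcc3 ⊢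
      rw [hcc3]
      match_scalars
      field_simp
      ring
  -- case A ¬B C
  · have z_sf : sh.vOf (sApply i f) = 0 := sh.vOf_of_not_mem fun hm => (memS.mp hm) hA
    have m_tf : sApply (i + 1) f ∈ sh.SYT := memT.mpr hB
    have z_stf : sh.vOf (sApply i (sApply (i + 1) f)) = 0 :=
      sh.vOf_of_not_mem fun hm => (memST.mp hm).2 hC
    simp only [sh.semiOp_vOf i hf, sh.semiOp_vOf (i + 1) hf, sh.semiOp_vOf i m_tf,
      sh.semiOp_vOf (i + 1) m_tf, sApply_sApply, z_sf, z_stf,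
      ha_f_i, ha_f_i1, ha_tf_i, ha_tf_i1,
      map_add, map_smul, smul_zero, add_zero, zero_add, map_zero, smul_smul, smul_add]
    rcases hA.ct with h | h <;> rcases hC.ct with h'' | h''
    · exfalso; omega
    · have hcc2 : c2 = c1 + 1 := by rw [hc1def, hc2def]; exact_mod_cast h
      have hcc3 : c3 = c1 - 1 := by rw [hc1def, hc3def]; exact_mod_cast h''
      rw [hcc2, hcc3]
      match_scalars <;> field_simp <;> ring
    · have hcc2 : c2 = c1 - 1 := by rw [hc1def, hc2def]; exact_mod_cast h
      have hcc3 : c3 = c1 + 1 := by rw [hc1def, hc3def]; exact_mod_cast h''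
      rw [hcc2, hcc3]
      match_scalars <;> field_simp <;> ring
    · exfalso; omega
  -- case A ¬B ¬C
  · have z_sf : sh.vOf (sApply i f) = 0 := sh.vOf_of_not_mem fun hm => (memS.mp hm) hA
    have m_tf : sApply (i + 1) f ∈ sh.SYT := memT.mpr hB
    have m_stf : sApply i (sApply (i + 1) f) ∈ sh.SYT := memST.mpr ⟨hB, hC⟩
    have z_tsf : sh.vOf (sApply (i + 1) (sApply i f)) = 0 :=
      sh.vOf_of_not_mem fun hm => (memTS.mp hm).1 hA
    have z_sts : sh.vOf (sApply i (sApply (i + 1) (sApply i f))) = 0 :=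
      sh.vOf_of_not_mem fun hm => (memSTS.mp hm).1 hA
    simp only [sh.semiOp_vOf i hf, sh.semiOp_vOf (i + 1) hf, sh.semiOp_vOf i m_tf,
      sh.semiOp_vOf (i + 1) m_tf, sh.semiOp_vOf (i + 1) m_stf, sApply_sApply, sApply_braid,
      z_sf, z_tsf, z_sts,
      ha_f_i, ha_f_i1, ha_tf_i, ha_tf_i1, ha_stf_i1,
      map_add, map_smul, smul_zero, add_zero, zero_add, map_zero, smul_smul, smul_add]
    rcases hA.ct with h | h
    · have hcc2 : c2 = c1 + 1 := by rw [hc1def, hc2def]; exact_mod_cast h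
      have k1 : c3 - (c1 + 1) ≠ 0 := fun hh => h32 (by rw [hcc2]; linear_combination hh)
      have k2 : c1 + 1 - c3 ≠ 0 := fun hh => h23 (by rw [hcc2]; linear_combination hh)
      have k3 : (-1 : ℂ) + (c3 - c1) ≠ 0 := fun hh => h32 (by rw [hcc2]; linear_combination hh)
      have k4 : c3 - c1 - 1 ≠ 0 := fun hh => h32 (by rw [hcc2]; linear_combination hh)
      rw [hcc2]
      match_scalars <;> field_simp [k1, k2, k3, k4] <;> ring
    · have hcc2 : c2 = c1 - 1 := by rw [hc1def, hc2def]; exact_mod_cast h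
      have k1 : c3 - (c1 - 1) ≠ 0 := fun hh => h32 (by rw [hcc2]; linear_combination hh)
      have k2 : c1 - 1 - c3 ≠ 0 := fun hh => h23 (by rw [hcc2]; linear_combination hh)
      have k3 : (1 : ℂ) + (c3 - c1) ≠ 0 := fun hh => h32 (by rw [hcc2]; linear_combination hh)
      have k4 : c3 - c1 + 1 ≠ 0 := fun hh => h32 (by rw [hcc2]; linear_combination hh)
      rw [hcc2]
      match_scalars <;> field_simp [k1, k2, k3, k4] <;> ring
  -- case ¬A B C
  · have m_sf : sApply i f ∈ sh.SYT := memS.mpr hA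
    have z_tf : sh.vOf (sApply (i + 1) f) = 0 := sh.vOf_of_not_mem fun hm => (memT.mp hm) hB
    have z_tsf : sh.vOf (sApply (i + 1) (sApply i f)) = 0 :=
      sh.vOf_of_not_mem fun hm => (memTS.mp hm).2 hC
    simp only [sh.semiOp_vOf i hf, sh.semiOp_vOf (i + 1) hf, sh.semiOp_vOf i m_sf,
      sh.semiOp_vOf (i + 1) m_sf, sApply_sApply, z_tf, z_tsf,
      ha_f_i, ha_f_i1, ha_sf_i, ha_sf_i1,
      map_add, map_smul, smul_zero, add_zero, zero_add, map_zero, smul_smul, smul_add]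
    rcases hB.ct with h' | h' <;> rcases hC.ct with h'' | h''
    · exfalso; omega
    · have hcc3 : c3 = c2 + 1 := by rw [hc2def, hc3def]; exact_mod_cast h'
      have hcc1 : c3 = c1 - 1 := by rw [hc1def, hc3def]; exact_mod_cast h''
      have hcc2 : c2 = c1 - 2 := by rw [hcc3] at hcc1; linear_combination hcc1
      rw [hcc2] at hcc3
      rw [hcc2, hcc3]
      match_scalars <;> field_simp <;> ring
    · have hcc3 : c3 = c2 - 1 := by rw [hc2def, hc3def]; exact_mod_cast h'
      have hcc1 : c3 = c1 + 1 := by rw [hc1def, hc3def]; exact_mod_cast h''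
      have hcc2 : c2 = c1 + 2 := by rw [hcc3] at hcc1; linear_combination hcc1
      rw [hcc2] at hcc3
      rw [hcc2, hcc3]
      match_scalars <;> field_simp <;> ring
    · exfalso; omega
  -- case ¬A B ¬C
  · have m_sf : sApply i f ∈ sh.SYT := memS.mpr hA
    have z_tf : sh.vOf (sApply (i + 1) f) = 0 := sh.vOf_of_not_mem fun hm => (memT.mp hm) hB
    have m_tsf : sApply (i + 1) (sApply i f) ∈ sh.SYT := memTS.mpr ⟨hA, hC⟩
    have z_sts : sh.vOf (sApply i (sApply (i + 1) (sApply i f))) = 0 :=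
      sh.vOf_of_not_mem fun hm => (memSTS.mp hm).2.1 hB
    simp only [sh.semiOp_vOf i hf, sh.semiOp_vOf (i + 1) hf, sh.semiOp_vOf i m_sf,
      sh.semiOp_vOf (i + 1) m_sf, sh.semiOp_vOf i m_tsf, sApply_sApply, sApply_braid,
      z_tf, z_sts,
      ha_f_i, ha_f_i1, ha_sf_i, ha_sf_i1, ha_tsf_i,
      map_add, map_smul, smul_zero, add_zero, zero_add, map_zero, smul_smul, smul_add]
    rcases hB.ct with h' | h'
    · have hcc3 : c3 = c2 + 1 := by rw [hc2def, hc3def]; exact_mod_cast h'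
      have k1 : c2 + 1 - c1 ≠ 0 := fun hh => h31 (by rw [hcc3]; linear_combination hh)
      have k2 : c1 - (c2 + 1) ≠ 0 := fun hh => h13 (by rw [hcc3]; linear_combination hh)
      have k3 : (1 : ℂ) + (c2 - c1) ≠ 0 := fun hh => h31 (by rw [hcc3]; linear_combination hh)
      have k4 : c2 - c1 + 1 ≠ 0 := fun hh => h31 (by rw [hcc3]; linear_combination hh)
      have k5 : (-1 : ℂ) + (c1 - c2) ≠ 0 := fun hh => h13 (by rw [hcc3]; linear_combination hh)
      have k6 : c1 - c2 - 1 ≠ 0 := fun hh => h13 (by rw [hcc3]; linear_combination hh)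
      rw [hcc3]
      match_scalars <;> field_simp [k1, k2, k3, k4, k5, k6] <;> ring
    · have hcc3 : c3 = c2 - 1 := by rw [hc2def, hc3def]; exact_mod_cast h'
      have k1 : c2 - 1 - c1 ≠ 0 := fun hh => h31 (by rw [hcc3]; linear_combination hh)
      have k2 : c1 - (c2 - 1) ≠ 0 := fun hh => h13 (by rw [hcc3]; linear_combination hh)
      have k3 : (-1 : ℂ) + (c2 - c1) ≠ 0 := fun hh => h31 (by rw [hcc3]; linear_combination hh)
      have k4 : c2 - c1 - 1 ≠ 0 := fun hh => h31 (by rw [hcc3]; linear_combination hh)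
      have k5 : (1 : ℂ) + (c1 - c2) ≠ 0 := fun hh => h13 (by rw [hcc3]; linear_combination hh)
      have k6 : c1 - c2 + 1 ≠ 0 := fun hh => h13 (by rw [hcc3]; linear_combination hh)
      rw [hcc3]
      match_scalars <;> field_simp [k1, k2, k3, k4, k5, k6] <;> ring
  -- case ¬A ¬B C
  · have m_sf : sApply i f ∈ sh.SYT := memS.mpr hA
    have m_tf : sApply (i + 1) f ∈ sh.SYT := memT.mpr hB
    have z_stf : sh.vOf (sApply i (sApply (i + 1) f)) = 0 :=
      sh.vOf_of_not_mem fun hm => (memST.mp hm).2 hC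
    have z_tsf : sh.vOf (sApply (i + 1) (sApply i f)) = 0 :=
      sh.vOf_of_not_mem fun hm => (memTS.mp hm).2 hC
    simp only [sh.semiOp_vOf i hf, sh.semiOp_vOf (i + 1) hf, sh.semiOp_vOf i m_sf,
      sh.semiOp_vOf (i + 1) m_sf, sh.semiOp_vOf i m_tf, sh.semiOp_vOf (i + 1) m_tf,
      sApply_sApply, z_stf, z_tsf,
      ha_f_i, ha_f_i1, ha_sf_i, ha_sf_i1, ha_tf_i, ha_tf_i1,
      map_add, map_smul, smul_zero, add_zero, zero_add, map_zero, smul_smul, smul_add]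
    match_scalars
    all_goals field_simp
    all_goals try ring
    all_goals tauto
  -- case ¬A ¬B ¬C : generic, all six standard
  · have m_sf : sApply i f ∈ sh.SYT := memS.mpr hA
    have m_tf : sApply (i + 1) f ∈ sh.SYT := memT.mpr hB
    have m_stf : sApply i (sApply (i + 1) f) ∈ sh.SYT := memST.mpr ⟨hB, hC⟩
    have m_tsf : sApply (i + 1) (sApply i f) ∈ sh.SYT := memTS.mpr ⟨hA, hC⟩
    have m_sts : sApply i (sApply (i + 1) (sApply i f)) ∈ sh.SYT := memSTS.mpr ⟨hA, hB, hC⟩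
    simp only [sh.semiOp_vOf i hf, sh.semiOp_vOf (i + 1) hf, sh.semiOp_vOf i m_sf,
      sh.semiOp_vOf (i + 1) m_sf, sh.semiOp_vOf i m_tf, sh.semiOp_vOf (i + 1) m_tf,
      sh.semiOp_vOf i m_tsf, sh.semiOp_vOf (i + 1) m_stf, sApply_sApply, sApply_braid,
      ha_f_i, ha_f_i1, ha_sf_i, ha_sf_i1, ha_tf_i, ha_tf_i1, ha_tsf_i, ha_stf_i1,
      map_add, map_smul, smul_zero, add_zero, zero_add, map_zero, smul_smul, smul_add]
    match_scalars
    all_goals field_simp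
    all_goals try ring
    all_goals tauto

end SkewShape
/-! ### Abstract word problem for the symmetric group -/

open scoped Classical

section WordProblem

variable {M : Type*} [Monoid M]

/-- Product of the images of the letters of a word. -/
def uProd (u : ℕ → M) (l : List ℕ) : M := (l.map u).prod

/-- The Coxeter relations of `S_n` for a family of monoid elements. -/
structure SnRel (u : ℕ → M) (n : ℕ) : Prop where
  invol : ∀ i, 1 ≤ i → i + 1 ≤ n → u i * u i = 1
  braid : ∀ i, 1 ≤ i → i + 2 ≤ n → u i * (u (i + 1) * u i) = u (i + 1) * (u i * u (i + 1))
  comm : ∀ i j, 1 ≤ i → i + 2 ≤ j → j + 1 ≤ n → u i * u j = u j * u i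

lemma uProd_nil (u : ℕ → M) : uProd u [] = 1 := rfl

lemma uProd_cons (u : ℕ → M) (i : ℕ) (l : List ℕ) :
    uProd u (i :: l) = u i * uProd u l := by simp [uProd]

lemma uProd_append (u : ℕ → M) (l1 l2 : List ℕ) :
    uProd u (l1 ++ l2) = uProd u l1 * uProd u l2 := by simp [uProd]

/-- `cWord k m = [k, k+1, …, m-1]`. -/
def cWord (k m : ℕ) : List ℕ := (List.range (m - k)).map (k + ·)

lemma cWord_nil {k m : ℕ} (h : m ≤ k) : cWord k m = [] := by
  simp [cWord, Nat.sub_eq_zero_of_le h]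

lemma cWord_cons {k m : ℕ} (h : k < m) : cWord k m = k :: cWord (k + 1) m := by
  unfold cWord
  rw [show m - k = (m - (k + 1)) + 1 by omega, List.range_succ_eq_map, List.map_cons,
    List.map_map]
  refine congrArg₂ _ (by omega) (List.map_congr_left fun x _ => by
    simp [Function.comp]; omega)

variable {u : ℕ → M} {n : ℕ}

lemma uProd_cWord_comm_aux (h : SnRel u n) {i : ℕ} (hi : 1 ≤ i) :
    ∀ d k m, m ≤ n → i + 2 ≤ k → m - k = d →
      u i * uProd u (cWord k m) = uProd u (cWord k m) * u i := by
  intro d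
  induction d with
  | zero =>
    intro k m hm hik hd
    rw [cWord_nil (by omega), uProd_nil, one_mul, mul_one]
  | succ d ih =>
    intro k m hm hik hd
    rw [cWord_cons (by omega), uProd_cons, ← mul_assoc, h.comm i k hi hik (by omega),
      mul_assoc, ih (k + 1) m hm (by omega) (by omega), ← mul_assoc]

lemma uProd_cWord_comm (h : SnRel u n) {i k m : ℕ} (hm : m ≤ n) (hi : 1 ≤ i)
    (hik : i + 2 ≤ k) : u i * uProd u (cWord k m) = uProd u (cWord k m) * u i :=
  uProd_cWord_comm_aux h hi (m - k) k m hm hik rfl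

lemma uProd_cWord_shift_aux (h : SnRel u n) :
    ∀ d j k m, m ≤ n → 1 ≤ k → k ≤ j → j + 2 ≤ m → j - k = d →
      u (j + 1) * uProd u (cWord k m) = uProd u (cWord k m) * u j := by
  intro d
  induction d with
  | zero =>
    intro j k m hm hk hkj hjm hd
    have hkj' : k = j := by omega
    subst hkj'
    rw [cWord_cons (by omega : k < m), cWord_cons (by omega : k + 1 < m),
      uProd_cons, uProd_cons]
    have hb := h.braid k hk (by omega)
    have hcm : u k * uProd u (cWord (k + 1 + 1) m) = uProd u (cWord (k + 1 + 1) m) * u k :=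
      uProd_cWord_comm h hm hk (by omega)
    calc u (k + 1) * (u k * (u (k + 1) * uProd u (cWord (k + 1 + 1) m)))
        = (u (k + 1) * (u k * u (k + 1))) * uProd u (cWord (k + 1 + 1) m) := by
          simp [mul_assoc]
      _ = (u k * (u (k + 1) * u k)) * uProd u (cWord (k + 1 + 1) m) := by rw [← hb]
      _ = u k * (u (k + 1) * (u k * uProd u (cWord (k + 1 + 1) m))) := by
          simp [mul_assoc]
      _ = u k * (u (k + 1) * (uProd u (cWord (k + 1 + 1) m) * u k)) := by rw [hcm]
      _ = u k * (u (k + 1) * uProd u (cWord (k + 1 + 1) m)) * u k := by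
          simp [mul_assoc]
  | succ d ih =>
    intro j k m hm hk hkj hjm hd
    rw [cWord_cons (by omega : k < m), uProd_cons, ← mul_assoc,
      (h.comm k (j + 1) hk (by omega) (by omega)).symm, mul_assoc,
      ih j (k + 1) m hm (by omega) (by omega) (by omega) (by omega), ← mul_assoc]

lemma uProd_cWord_shift (h : SnRel u n) {j k m : ℕ} (hm : m ≤ n) (hk : 1 ≤ k)
    (hkj : k ≤ j) (hjm : j + 2 ≤ m) :
    u (j + 1) * uProd u (cWord k m) = uProd u (cWord k m) * u j :=
  uProd_cWord_shift_aux h (j - k) j k m hm hk hkj hjm rfl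

/-- The canonical word of a permutation in `S_m`. -/
noncomputable def cwNF : ℕ → Equiv.Perm ℕ → List ℕ
  | 0, _ => []
  | (m + 1), w =>
      cWord (w (m + 1)) (m + 1) ++
        cwNF m ((wordProd (cWord (w (m + 1)) (m + 1)))⁻¹ * w)

lemma wordProd_nil : wordProd [] = 1 := rfl

lemma wordProd_cons (i : ℕ) (l : List ℕ) :
    wordProd (i :: l) = Equiv.swap i (i + 1) * wordProd l := by simp [wordProd]

lemma wordProd_append (l1 l2 : List ℕ) :
    wordProd (l1 ++ l2) = wordProd l1 * wordProd l2 := by simp [wordProd]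

lemma snrel_swap (n : ℕ) : SnRel (fun i => Equiv.swap i (i + 1)) n where
  invol := fun i _ _ => Equiv.swap_mul_self _ _
  braid := fun i _ _ => swap_braid i
  comm := fun i j _ hij _ => swap_commute hij

lemma wordProd_eq_uProd (l : List ℕ) :
    wordProd l = uProd (fun i => Equiv.swap i (i + 1)) l := rfl

lemma wordProd_cWord_apply_aux :
    ∀ d k m, k ≤ m → m - k = d → ∀ v : ℕ,
      wordProd (cWord k m) v =
        if v = m then k else if k ≤ v ∧ v < m then v + 1 else v := by
  intro d
  induction d with
  | zero =>
    intro k m hk hd v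
    rw [cWord_nil (by omega), wordProd_nil]
    simp only [Equiv.Perm.one_apply]
    split_ifs <;> omega
  | succ d ih =>
    intro k m hk hd v
    rw [cWord_cons (by omega), wordProd_cons, Equiv.Perm.mul_apply,
      ih (k + 1) m (by omega) (by omega) v]
    simp only [Equiv.swap_apply_def]
    split_ifs <;> omega

lemma wordProd_cWord_apply {k m : ℕ} (hk : k ≤ m) (v : ℕ) :
    wordProd (cWord k m) v =
      if v = m then k else if k ≤ v ∧ v < m then v + 1 else v :=
  wordProd_cWord_apply_aux (m - k) k m hk rfl v

lemma wordProd_fixOut {l : List ℕ} (hl : IsSnWord n l) : FixOut (wordProd l) 1 n := by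
  induction l with
  | nil => intro v _; rfl
  | cons i l ih =>
    intro v hv
    obtain ⟨hi1, hi2⟩ := hl i (List.mem_cons_self)
    have hrest : wordProd l v = v := ih (fun j hj => hl j (List.mem_cons_of_mem i hj)) v hv
    rw [wordProd_cons, Equiv.Perm.mul_apply, hrest]
    exact Equiv.swap_apply_of_ne_of_ne (by omega) (by omega)

lemma cwNF_one : ∀ m, cwNF m 1 = []
  | 0 => rfl
  | (m + 1) => by
    simp only [cwNF, Equiv.Perm.one_apply, cWord_nil le_rfl, wordProd_nil, inv_one, mul_one,
      List.nil_append]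
    exact cwNF_one m

lemma residual_fixOut {m : ℕ} {w : Equiv.Perm ℕ} (hw : FixOut w 1 (m + 1)) :
    FixOut ((wordProd (cWord (w (m + 1)) (m + 1)))⁻¹ * w) 1 m := by
  have hkr : 1 ≤ w (m + 1) ∧ w (m + 1) ≤ m + 1 := hw.mem (by omega) le_rfl
  intro v hv
  rcases (by omega : v < 1 ∨ v = m + 1 ∨ m + 1 < v) with h | h | h
  · have hwv : w v = v := hw v (Or.inl h)
    have hcv : wordProd (cWord (w (m + 1)) (m + 1)) v = v := by
      rw [wordProd_cWord_apply hkr.2]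
      split_ifs <;> omega
    have h2 := congrArg (⇑(wordProd (cWord (w (m + 1)) (m + 1)))⁻¹) hcv
    rw [Equiv.Perm.coe_inv, Equiv.symm_apply_apply] at h2
    rw [Equiv.Perm.mul_apply, hwv]
    exact h2.symm
  · subst h
    have hcm : wordProd (cWord (w (m + 1)) (m + 1)) (m + 1) = w (m + 1) := by
      rw [wordProd_cWord_apply hkr.2]
      simp
    have h2 := congrArg (⇑(wordProd (cWord (w (m + 1)) (m + 1)))⁻¹) hcm
    rw [Equiv.Perm.coe_inv, Equiv.symm_apply_apply] at h2
    rw [Equiv.Perm.mul_apply]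
    exact h2.symm
  · have hwv : w v = v := hw v (Or.inr (by omega))
    have hcv : wordProd (cWord (w (m + 1)) (m + 1)) v = v := by
      rw [wordProd_cWord_apply hkr.2]
      split_ifs <;> omega
    have h2 := congrArg (⇑(wordProd (cWord (w (m + 1)) (m + 1)))⁻¹) hcv
    rw [Equiv.Perm.coe_inv, Equiv.symm_apply_apply] at h2
    rw [Equiv.Perm.mul_apply, hwv]
    exact h2.symm

lemma cwNF_step (h : SnRel u n) :
    ∀ m, m ≤ n → ∀ w : Equiv.Perm ℕ, FixOut w 1 m → ∀ i, 1 ≤ i → i + 1 ≤ m →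
      uProd u (cwNF m (Equiv.swap i (i + 1) * w)) = u i * uProd u (cwNF m w) := by
  intro m
  induction m with
  | zero => intro _ _ _ i _ him; omega
  | succ m ih =>
    intro hmn w hw i hi1 him
    have unfold2 : cwNF (m + 1) w = cWord (w (m + 1)) (m + 1) ++
        cwNF m ((wordProd (cWord (w (m + 1)) (m + 1)))⁻¹ * w) := rfl
    have unfold1 : cwNF (m + 1) (Equiv.swap i (i + 1) * w) =
        cWord ((Equiv.swap i (i + 1) * w) (m + 1)) (m + 1) ++
          cwNF m ((wordProd (cWord ((Equiv.swap i (i + 1) * w) (m + 1)) (m + 1)))⁻¹ *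
            (Equiv.swap i (i + 1) * w)) := rfl
    have hkr : 1 ≤ w (m + 1) ∧ w (m + 1) ≤ m + 1 := hw.mem (by omega) le_rfl
    have hswi : (Equiv.swap i (i + 1) * w) (m + 1) = Equiv.swap i (i + 1) (w (m + 1)) :=
      Equiv.Perm.mul_apply _ _ _
    have hresfix := residual_fixOut hw
    rcases (by omega : (i + 2 ≤ w (m + 1)) ∨ (w (m + 1) + 1 ≤ i) ∨ w (m + 1) = i + 1 ∨
        w (m + 1) = i) with hcase | hcase | hcase | hcase
    -- commuting case : i + 2 ≤ k
    · have hk : (Equiv.swap i (i + 1) * w) (m + 1) = w (m + 1) := by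
        rw [hswi]; exact Equiv.swap_apply_of_ne_of_ne (by omega) (by omega)
      have hcomm : Equiv.swap i (i + 1) * wordProd (cWord (w (m + 1)) (m + 1)) =
          wordProd (cWord (w (m + 1)) (m + 1)) * Equiv.swap i (i + 1) := by
        rw [wordProd_eq_uProd]
        exact uProd_cWord_comm (snrel_swap (m + 1)) le_rfl hi1 hcase
      have h1 : (wordProd (cWord (w (m + 1)) (m + 1)))⁻¹ * Equiv.swap i (i + 1) =
          Equiv.swap i (i + 1) * (wordProd (cWord (w (m + 1)) (m + 1)))⁻¹ := by
        calc (wordProd (cWord (w (m + 1)) (m + 1)))⁻¹ * Equiv.swap i (i + 1)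
            = (wordProd (cWord (w (m + 1)) (m + 1)))⁻¹ *
              ((Equiv.swap i (i + 1) * wordProd (cWord (w (m + 1)) (m + 1))) *
                (wordProd (cWord (w (m + 1)) (m + 1)))⁻¹) := by group
          _ = (wordProd (cWord (w (m + 1)) (m + 1)))⁻¹ *
              ((wordProd (cWord (w (m + 1)) (m + 1)) * Equiv.swap i (i + 1)) *
                (wordProd (cWord (w (m + 1)) (m + 1)))⁻¹) := by rw [hcomm]
          _ = Equiv.swap i (i + 1) * (wordProd (cWord (w (m + 1)) (m + 1)))⁻¹ := by group
      have hres : (wordProd (cWord (w (m + 1)) (m + 1)))⁻¹ * (Equiv.swap i (i + 1) * w) =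
          Equiv.swap i (i + 1) * ((wordProd (cWord (w (m + 1)) (m + 1)))⁻¹ * w) := by
        rw [← mul_assoc, h1, mul_assoc]
      rw [unfold1, unfold2, hk, hres, uProd_append, uProd_append,
        ih (by omega) _ hresfix i hi1 (by omega), ← mul_assoc, ← mul_assoc]
      congr 1
      exact (uProd_cWord_comm h hmn hi1 hcase).symm
    -- shifting case : k + 1 ≤ i
    · obtain ⟨j, rfl⟩ : ∃ j, i = j + 1 := ⟨i - 1, by omega⟩
      have hk : (Equiv.swap (j + 1) (j + 1 + 1) * w) (m + 1) = w (m + 1) := by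
        rw [hswi]; exact Equiv.swap_apply_of_ne_of_ne (by omega) (by omega)
      have hshift : Equiv.swap (j + 1) (j + 1 + 1) * wordProd (cWord (w (m + 1)) (m + 1)) =
          wordProd (cWord (w (m + 1)) (m + 1)) * Equiv.swap j (j + 1) := by
        rw [wordProd_eq_uProd]
        exact uProd_cWord_shift (snrel_swap (m + 1)) le_rfl hkr.1 (by omega) (by omega)
      have h1 : (wordProd (cWord (w (m + 1)) (m + 1)))⁻¹ * Equiv.swap (j + 1) (j + 1 + 1) =
          Equiv.swap j (j + 1) * (wordProd (cWord (w (m + 1)) (m + 1)))⁻¹ := by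
        calc (wordProd (cWord (w (m + 1)) (m + 1)))⁻¹ * Equiv.swap (j + 1) (j + 1 + 1)
            = (wordProd (cWord (w (m + 1)) (m + 1)))⁻¹ *
              ((Equiv.swap (j + 1) (j + 1 + 1) * wordProd (cWord (w (m + 1)) (m + 1))) *
                (wordProd (cWord (w (m + 1)) (m + 1)))⁻¹) := by group
          _ = (wordProd (cWord (w (m + 1)) (m + 1)))⁻¹ *
              ((wordProd (cWord (w (m + 1)) (m + 1)) * Equiv.swap j (j + 1)) *
                (wordProd (cWord (w (m + 1)) (m + 1)))⁻¹) := by rw [hshift]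
          _ = Equiv.swap j (j + 1) * (wordProd (cWord (w (m + 1)) (m + 1)))⁻¹ := by group
      have hres : (wordProd (cWord (w (m + 1)) (m + 1)))⁻¹ *
            (Equiv.swap (j + 1) (j + 1 + 1) * w) =
          Equiv.swap j (j + 1) * ((wordProd (cWord (w (m + 1)) (m + 1)))⁻¹ * w) := by
        rw [← mul_assoc, h1, mul_assoc]
      rw [unfold1, unfold2, hk, hres, uProd_append, uProd_append,
        ih (by omega) _ hresfix j (by omega) (by omega), ← mul_assoc, ← mul_assoc]
      congr 1
      exact (uProd_cWord_shift h hmn hkr.1 (by omega) (by omega)).symm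
    -- lengthening case : k = i + 1
    · have hk : (Equiv.swap i (i + 1) * w) (m + 1) = i := by
        rw [hswi, hcase]; exact Equiv.swap_apply_right i (i + 1)
      have hhead : cWord i (m + 1) = i :: cWord (i + 1) (m + 1) := cWord_cons (by omega)
      have hcfac : wordProd (cWord i (m + 1)) =
          Equiv.swap i (i + 1) * wordProd (cWord (i + 1) (m + 1)) := by
        rw [hhead, wordProd_cons]
      have hres : (wordProd (cWord i (m + 1)))⁻¹ * (Equiv.swap i (i + 1) * w) =
          (wordProd (cWord (i + 1) (m + 1)))⁻¹ * w := by
        rw [hcfac, mul_inv_rev, Equiv.swap_inv, mul_assoc, ← mul_assoc (Equiv.swap i (i + 1)),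
          Equiv.swap_mul_self, one_mul]
      rw [unfold1, unfold2, hk, hres, hcase, uProd_append, uProd_append, hhead, uProd_cons,
        mul_assoc]
    -- shortening case : k = i
    · have hk : (Equiv.swap i (i + 1) * w) (m + 1) = i + 1 := by
        rw [hswi, hcase]; exact Equiv.swap_apply_left i (i + 1)
      have hhead : cWord i (m + 1) = i :: cWord (i + 1) (m + 1) := cWord_cons (by omega)
      have hcfac : wordProd (cWord i (m + 1)) =
          Equiv.swap i (i + 1) * wordProd (cWord (i + 1) (m + 1)) := by
        rw [hhead, wordProd_cons]
      have hres : (wordProd (cWord i (m + 1)))⁻¹ * w =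
          (wordProd (cWord (i + 1) (m + 1)))⁻¹ * (Equiv.swap i (i + 1) * w) := by
        rw [hcfac, mul_inv_rev, Equiv.swap_inv, mul_assoc]
      rw [unfold1, unfold2, hk, hcase, hres, uProd_append, uProd_append, hhead, uProd_cons,
        ← mul_assoc, ← mul_assoc, ← mul_assoc, h.invol i hi1 (by omega), one_mul]

lemma uProd_eq_of_wordProd_eq (h : SnRel u n) {l l' : List ℕ}
    (hl : IsSnWord n l) (hl' : IsSnWord n l') (he : wordProd l = wordProd l') :
    uProd u l = uProd u l' := by
  have key : ∀ l'' : List ℕ, IsSnWord n l'' →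
      uProd u l'' = uProd u (cwNF n (wordProd l'')) := by
    intro l''
    induction l'' with
    | nil => intro _; rw [wordProd_nil, cwNF_one]
    | cons i t iht =>
      intro hl''
      have hi := hl'' i (List.mem_cons_self)
      have ht : IsSnWord n t := fun j hj => hl'' j (List.mem_cons_of_mem i hj)
      rw [uProd_cons, wordProd_cons,
        cwNF_step h n le_rfl _ (wordProd_fixOut ht) i hi.1 hi.2, iht ht]
  rw [key l hl, key l' hl', he]

end WordProblem
/-! ### Part 1 : path expansion of coefficients -/

namespace SkewShape

variable (sh : SkewShape) {f g : (ℕ × ℕ) → ℕ} {i : ℕ}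

lemma isSubpath_head : ∀ {is : List ℕ} {zs : List Bool} {f : (ℕ × ℕ) → ℕ},
    sh.IsSubpath f is zs → f ∈ sh.SYT
  | [], [], _, h => h
  | [], _ :: _, _, h => h.elim
  | _ :: _, [], _, h => h.elim
  | _ :: _, _ :: _, _, h => h.1

lemma subEnd_mem : ∀ {is : List ℕ} {zs : List Bool} {f : (ℕ × ℕ) → ℕ},
    sh.IsSubpath f is zs → subEnd f is zs ∈ sh.SYT := by
  intro is
  induction is with
  | nil =>
    intro zs f h
    cases zs with
    | nil => exact h
    | cons z zs => exact h.elim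
  | cons i is ih =>
    intro zs f h
    cases zs with
    | nil => exact h.elim
    | cons z zs => exact ih h.2

lemma pathCoeff_of_not_mem (h : f ∉ sh.SYT) (is : List ℕ) (g : (ℕ × ℕ) → ℕ) :
    sh.pathCoeff f is g = 0 := by
  rw [pathCoeff]
  apply Finset.sum_eq_zero
  intro zs _
  rw [if_neg]
  rintro ⟨hsub, -⟩
  exact h (sh.isSubpath_head hsub)

lemma pathCoeff_end_not_mem (h : g ∉ sh.SYT) (f : (ℕ × ℕ) → ℕ) (is : List ℕ) :
    sh.pathCoeff f is g = 0 := by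
  rw [pathCoeff]
  apply Finset.sum_eq_zero
  intro zs _
  rw [if_neg]
  rintro ⟨hsub, hend⟩
  exact h (hend ▸ sh.subEnd_mem hsub)

lemma ofFn_cons' {n : ℕ} (z : Bool) (zs : Fin n → Bool) :
    List.ofFn (Fin.cons z zs : Fin (n + 1) → Bool) = z :: List.ofFn zs := by
  rw [List.ofFn_succ]
  simp

lemma pathCoeff_cons (hf : f ∈ sh.SYT) (i : ℕ) (is : List ℕ) (g : (ℕ × ℕ) → ℕ) :
    sh.pathCoeff f (i :: is) g =
      sh.aI f i * sh.pathCoeff f is g +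
        (1 + sh.aI f i) * sh.pathCoeff (sApply i f) is g := by
  rw [pathCoeff, pathCoeff, pathCoeff]
  simp only [List.length_cons]
  have hsum : (∑ x : Fin (is.length + 1) → Bool,
      if sh.IsSubpath f (i :: is) (List.ofFn x) ∧ subEnd f (i :: is) (List.ofFn x) = g then
        sh.subWeight f (i :: is) (List.ofFn x) else 0) =
    ∑ p : Bool × (Fin is.length → Bool),
      if sh.IsSubpath f (i :: is) (p.1 :: List.ofFn p.2) ∧
          subEnd f (i :: is) (p.1 :: List.ofFn p.2) = g then
        sh.subWeight f (i :: is) (p.1 :: List.ofFn p.2) else 0 := by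
    refine (Fintype.sum_equiv (Fin.consEquiv fun _ : Fin (is.length + 1) => Bool)
      (fun p : Bool × (Fin is.length → Bool) =>
        if sh.IsSubpath f (i :: is) (p.1 :: List.ofFn p.2) ∧
            subEnd f (i :: is) (p.1 :: List.ofFn p.2) = g then
          sh.subWeight f (i :: is) (p.1 :: List.ofFn p.2) else 0)
      (fun x : Fin (is.length + 1) → Bool =>
        if sh.IsSubpath f (i :: is) (List.ofFn x) ∧ subEnd f (i :: is) (List.ofFn x) = g then
          sh.subWeight f (i :: is) (List.ofFn x) else 0) ?_).symm
    intro p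
    simp only [Fin.consEquiv, Equiv.coe_fn_mk, ofFn_cons']
  rw [hsum, Fintype.sum_prod_type, Fintype.sum_bool]
  simp only [SkewShape.IsSubpath, subEnd, SkewShape.subWeight, hf, true_and,
    eq_self_iff_true, if_true, Bool.false_eq_true, if_false,
    Finset.mul_sum, mul_ite, mul_zero]
  ring

lemma pathCoeff_nil (hf : f ∈ sh.SYT) (g : (ℕ × ℕ) → ℕ) :
    sh.pathCoeff f [] g = if f = g then 1 else 0 := by
  rw [pathCoeff]
  have hterm : ∀ zs : Fin ([] : List ℕ).length → Bool,
      (if sh.IsSubpath f [] (List.ofFn zs) ∧ subEnd f [] (List.ofFn zs) = g then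
        sh.subWeight f [] (List.ofFn zs) else 0) = if f = g then 1 else 0 := by
    intro zs
    have hzs : List.ofFn zs = [] := by
      apply List.eq_nil_of_length_eq_zero
      simp
    rw [hzs]
    simp only [SkewShape.IsSubpath, subEnd, SkewShape.subWeight, hf, true_and]
  rw [Finset.sum_congr rfl (fun zs _ => hterm zs), Finset.sum_const]
  have hcard : Fintype.card (Fin ([] : List ℕ).length → Bool) = 1 := by
    simp
  rw [Finset.card_univ, hcard, one_smul]

/-- Part 1 of the theorem: coefficients of the operator word are subpath-weight sums. -/
lemma opWord_coeff (is : List ℕ) :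
    ∀ f₀, f₀ ∈ sh.SYT → ∀ S : sh.SYTt,
      (sh.opWord is.reverse (sh.vOf f₀)) S = sh.pathCoeff f₀ is S.1 := by
  induction is with
  | nil =>
    intro f0 hf0 S
    show (sh.vOf f0) S = sh.pathCoeff f0 [] S.1
    rw [sh.vOf_of_mem hf0]
    erw [Finsupp.single_apply]
    rw [sh.pathCoeff_nil hf0]
    by_cases he : f0 = S.1
    · rw [if_pos he]
      exact if_pos (Subtype.ext he)
    · rw [if_neg he]
      exact if_neg (fun hh => he (congrArg Subtype.val hh))
  | cons i is ih =>
    intro f0 hf0 S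
    rw [List.reverse_cons, sh.opWord_append]
    have h1 : (sh.opWord [i]) (sh.vOf f0) = sh.semiOp i (sh.vOf f0) := rfl
    rw [LinearMap.comp_apply, h1, sh.semiOp_vOf i hf0, map_add, map_smul, map_smul,
      Finsupp.add_apply, Finsupp.smul_apply, Finsupp.smul_apply, smul_eq_mul, smul_eq_mul,
      ih f0 hf0 S, sh.pathCoeff_cons hf0]
    by_cases hs : sApply i f0 ∈ sh.SYT
    · rw [ih _ hs S]
    · rw [sh.vOf_of_not_mem hs, map_zero, Finsupp.zero_apply, mul_zero,
        sh.pathCoeff_of_not_mem hs, mul_zero]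

/-! ### Part 2 : path independence -/

lemma isPath_head : ∀ {is : List ℕ}, sh.IsPath f is → f ∈ sh.SYT
  | [], h => h
  | _ :: _, h => h.1

lemma step_letter (hf : f ∈ sh.SYT) (hg : sApply i f ∈ sh.SYT) :
    (1 ≤ i ∧ i + 1 ≤ sh.nb) ∨ sh.nb + 1 ≤ i := by
  by_contra hc
  push_neg at hc
  obtain ⟨hc1, hc2⟩ := hc
  rcases (by omega : i = 0 ∨ (i = sh.nb ∧ 1 ≤ sh.nb)) with rfl | ⟨rfl, hn1⟩
  · rcases Nat.eq_zero_or_pos sh.nb with hn | hn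
    · have hcells : sh.cells = ∅ := Finset.card_eq_zero.mp hn
      have h00 : f (0, 0) = 0 := hf.1.2 _ (by simp [hcells])
      have hval := hg.1.2 (0, 0) (by simp [hcells])
      rw [show sApply 0 f (0, 0) = Equiv.swap 0 1 (f (0, 0)) from rfl, h00,
        Equiv.swap_apply_left] at hval
      exact one_ne_zero hval
    · obtain ⟨hb, hfb⟩ := sh.boxOf_spec hf le_rfl hn
      have hmap := hg.1.1.1 (by exact_mod_cast hb)
      rw [show sApply 0 f (sh.boxOf f 1) = Equiv.swap 0 1 (f (sh.boxOf f 1)) from rfl, hfb,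
        Equiv.swap_apply_right] at hmap
      simp only [Finset.coe_Icc, Set.mem_Icc] at hmap
      omega
  · obtain ⟨hb, hfb⟩ := sh.boxOf_spec hf hn1 le_rfl
    have hmap := hg.1.1.1 (by exact_mod_cast hb)
    rw [show sApply sh.nb f (sh.boxOf f sh.nb) =
        Equiv.swap sh.nb (sh.nb + 1) (f (sh.boxOf f sh.nb)) from rfl, hfb,
      Equiv.swap_apply_left] at hmap
    simp only [Finset.coe_Icc, Set.mem_Icc] at hmap
    omega

lemma path_letters : ∀ {is : List ℕ} {f : (ℕ × ℕ) → ℕ}, sh.IsPath f is →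
    ∀ i ∈ is, (1 ≤ i ∧ i + 1 ≤ sh.nb) ∨ sh.nb + 1 ≤ i := by
  intro is
  induction is with
  | nil => intro f _ i hi; exact absurd hi List.not_mem_nil
  | cons j is ih =>
    intro f h i hi
    rcases List.mem_cons.mp hi with rfl | hi'
    · exact sh.step_letter h.1 (sh.isPath_head h.2)
    · exact ih h.2 i hi'

lemma opWord_filter (l : List ℕ)
    (hl : ∀ i ∈ l, (1 ≤ i ∧ i + 1 ≤ sh.nb) ∨ sh.nb + 1 ≤ i) :
    sh.opWord l = sh.opWord (l.filter fun i => decide (1 ≤ i ∧ i + 1 ≤ sh.nb)) := by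
  induction l with
  | nil => rfl
  | cons i l ihl =>
    have hi := hl i (List.mem_cons_self)
    have hl' := fun j hj => hl j (List.mem_cons_of_mem i hj)
    rcases hi with hEff | hTriv
    · rw [List.filter_cons_of_pos (by simpa using hEff)]
      show sh.semiOp i ∘ₗ sh.opWord l = sh.semiOp i ∘ₗ sh.opWord _
      rw [ihl hl']
    · rw [List.filter_cons_of_neg (by simp; omega)]
      show sh.semiOp i ∘ₗ sh.opWord l = _
      rw [sh.semiOp_triv hTriv, LinearMap.id_comp, ihl hl']

lemma filter_isSnWord (l : List ℕ) :
    IsSnWord sh.nb (l.filter fun i => decide (1 ≤ i ∧ i + 1 ≤ sh.nb)) := by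
  intro j hj
  rw [List.mem_filter] at hj
  simpa using hj.2

lemma wordProd_filter_apply (l : List ℕ)
    (hl : ∀ i ∈ l, (1 ≤ i ∧ i + 1 ≤ sh.nb) ∨ sh.nb + 1 ≤ i) {m : ℕ}
    (hm1 : 1 ≤ m) (hm2 : m ≤ sh.nb) :
    wordProd l m = wordProd (l.filter fun i => decide (1 ≤ i ∧ i + 1 ≤ sh.nb)) m := by
  induction l with
  | nil => rfl
  | cons i l ihl =>
    have hi := hl i (List.mem_cons_self)
    have hl' := fun j hj => hl j (List.mem_cons_of_mem i hj)
    have hrec := ihl hl'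
    have hmem := (wordProd_fixOut (sh.filter_isSnWord l)).mem hm1 hm2
    rcases hi with hEff | hTriv
    · rw [List.filter_cons_of_pos (by simpa using hEff), wordProd_cons, wordProd_cons,
        Equiv.Perm.mul_apply, Equiv.Perm.mul_apply, hrec]
    · rw [List.filter_cons_of_neg (by simp; omega), wordProd_cons, Equiv.Perm.mul_apply,
        hrec]
      exact Equiv.swap_apply_of_ne_of_ne (by omega) (by omega)

lemma applyWord_eq : ∀ (is : List ℕ) (f : (ℕ × ℕ) → ℕ) (b : ℕ × ℕ),
    applyWord is f b = wordProd is.reverse (f b) := by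
  intro is
  induction is with
  | nil => intro f b; rfl
  | cons i is ihl =>
    intro f b
    show applyWord is (sApply i f) b = _
    rw [ihl, List.reverse_cons, wordProd_append, Equiv.Perm.mul_apply]
    have : wordProd [i] (f b) = Equiv.swap i (i + 1) (f b) := by
      rw [wordProd_cons, wordProd_nil, mul_one]
    rw [this]
    rfl

lemma snrel_semiOp : SnRel (M := Module.End ℂ (sh.SYTt →₀ ℂ)) sh.semiOp sh.nb where
  invol := fun i h1 h2 => by
    rw [Module.End.mul_eq_comp, sh.semiOp_invol h1 h2]
    rfl
  braid := fun i h1 h2 => by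
    simp only [Module.End.mul_eq_comp]
    exact sh.semiOp_braid h1 h2
  comm := fun i j h1 hij hjn => by
    simp only [Module.End.mul_eq_comp]
    exact sh.semiOp_comm h1 hij hjn

lemma opWord_eq_uProd (l : List ℕ) :
    sh.opWord l = uProd (M := Module.End ℂ (sh.SYTt →₀ ℂ)) sh.semiOp l := by
  induction l with
  | nil => rfl
  | cons i l ihl =>
    rw [uProd_cons, ← ihl]
    rfl

lemma opWord_path_eq {is is' : List ℕ} {T : (ℕ × ℕ) → ℕ}
    (h1 : sh.IsPath sh.colReading is) (h2 : sh.IsPath sh.colReading is')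
    (e1 : applyWord is sh.colReading = T) (e2 : applyWord is' sh.colReading = T) :
    sh.opWord is.reverse = sh.opWord is'.reverse := by
  have hC : sh.colReading ∈ sh.SYT := sh.isPath_head h1
  have hlet1 : ∀ i ∈ is.reverse, (1 ≤ i ∧ i + 1 ≤ sh.nb) ∨ sh.nb + 1 ≤ i :=
    fun i hi => sh.path_letters h1 i (List.mem_reverse.mp hi)
  have hlet2 : ∀ i ∈ is'.reverse, (1 ≤ i ∧ i + 1 ≤ sh.nb) ∨ sh.nb + 1 ≤ i :=
    fun i hi => sh.path_letters h2 i (List.mem_reverse.mp hi)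
  rw [sh.opWord_filter is.reverse hlet1, sh.opWord_filter is'.reverse hlet2,
    sh.opWord_eq_uProd, sh.opWord_eq_uProd]
  apply uProd_eq_of_wordProd_eq sh.snrel_semiOp (sh.filter_isSnWord _) (sh.filter_isSnWord _)
  apply Equiv.ext
  intro v
  by_cases hv : 1 ≤ v ∧ v ≤ sh.nb
  · obtain ⟨b, hb, hfb⟩ := hC.1.1.2.2
      (show v ∈ (↑(Finset.Icc 1 sh.nb) : Set ℕ) by
        simp only [Finset.coe_Icc, Set.mem_Icc]; omega)
    rw [← hfb,
      ← sh.wordProd_filter_apply is.reverse hlet1 (by rw [hfb]; omega) (by rw [hfb]; omega),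
      ← sh.wordProd_filter_apply is'.reverse hlet2 (by rw [hfb]; omega) (by rw [hfb]; omega),
      ← applyWord_eq, ← applyWord_eq, e1, e2]
  · have f1 := wordProd_fixOut (sh.filter_isSnWord is.reverse) v (by omega)
    have f2 := wordProd_fixOut (sh.filter_isSnWord is'.reverse) v (by omega)
    rw [f1, f2]

end SkewShape
/-- **Lemma (path expansion and path independence).**
For any path `π = (T_0 →^{s_{i_1}} ⋯ →^{s_{i_k}} T_k)` in the weak Bruhat graph on
`SYT(λ/μ)` and any `S ∈ SYT(λ/μ)`, the coefficient of `v_S` in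
`(σ_{i_k} ∘ ⋯ ∘ σ_{i_1})(v_{T_0})` equals the sum of `π`-weights of the subpaths of `π`
terminating at `S`.  In particular, for two paths from the column reading tableau `C`
to the same tableau `T`, the corresponding subpath-weight sums agree for every `S`. -/
theorem path_coefficients_and_independence (sh : SkewShape) :
    (∀ (f₀ : (ℕ × ℕ) → ℕ) (is : List ℕ), sh.IsPath f₀ is →
        ∀ S : sh.SYTt,
          (sh.opWord is.reverse (sh.vOf f₀)) S = sh.pathCoeff f₀ is S.1) ∧
    (∀ (is is' : List ℕ) (T : (ℕ × ℕ) → ℕ),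
        sh.IsPath sh.colReading is → sh.IsPath sh.colReading is' →
        applyWord is sh.colReading = T → applyWord is' sh.colReading = T →
        ∀ S : (ℕ × ℕ) → ℕ,
          sh.pathCoeff sh.colReading is S = sh.pathCoeff sh.colReading is' S) := by
  constructor
  · intro f₀ is hpath S
    exact sh.opWord_coeff is f₀ (sh.isPath_head hpath) S
  · intro is is' T h1 h2 e1 e2 S
    have hC : sh.colReading ∈ sh.SYT := sh.isPath_head h1
    have hop := sh.opWord_path_eq h1 h2 e1 e2
    by_cases hS : S ∈ sh.SYT
    · have c1 := sh.opWord_coeff is sh.colReading hC ⟨S, hS⟩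
      have c2 := sh.opWord_coeff is' sh.colReading hC ⟨S, hS⟩
      rw [← c1, ← c2, hop]
    · rw [sh.pathCoeff_end_not_mem hS, sh.pathCoeff_end_not_mem hS]
end

section
/- Let (c, λ/μ) be a placed skew shape with n boxes and T ∈ SYT(λ/μ). For every reduced word w_T = s_{i_1} s_{i_2} ⋯ s_{i_k}, the coefficient of v_T in the vector (T_{i_1} ∘ T_{i_2} ∘ ⋯ ∘ T_{i_k})(v_C) equals ∏_{(i,j) ∈ inv(T)} (q^{−1} + ã_{i,j}(T)), the product being over all inversions of T. -/
open scoped Classical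

namespace SkewShape

/-- The set of inversions of a tableau: pairs `(i, j)` with `i > j` such that `i` lies
strictly south and strictly west of `j`. -/
noncomputable def invSet (sh : SkewShape) (f : (ℕ × ℕ) → ℕ) : Finset (ℕ × ℕ) :=
  (Finset.Icc 1 sh.nb ×ˢ Finset.Icc 1 sh.nb).filter fun p =>
    p.2 < p.1 ∧ (sh.boxOf f p.2).1 < (sh.boxOf f p.1).1 ∧ (sh.boxOf f p.1).2 < (sh.boxOf f p.2).2

end SkewShape

noncomputable section

/-- A placed skew shape `(c, λ/μ)` for the affine Hecke algebra: a skew shape decomposed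
into pages (pairwise disjoint skew shapes), each page `P` carrying a page number `β_P`,
with content function `c(b) = β_P + ct(b)` for a box `b` of the page `P`; the parameter
`q` is nonzero and not a root of unity, and the page numbers are chosen so that
`q^{2(c(b) - c(b'))} ≠ 1` whenever `b` and `b'` lie on different pages. -/
structure PlacedSkewShape where
  sh : SkewShape
  q : ℂ
  hq0 : q ≠ 0
  hq_not_root_of_unity : ∀ k : ℕ, 0 < k → q ^ k ≠ 1
  page : ℕ × ℕ → ℕ
  beta : ℕ → ℂ
  pages_are_skew : ∀ p : ℕ, (∃ b ∈ sh.cells, page b = p) →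
    ∃ shp : SkewShape, shp.cells = sh.cells.filter fun b => page b = p
  pages_separated : ∀ b ∈ sh.cells, ∀ b' ∈ sh.cells, page b ≠ page b' →
    q ^ ((2 : ℂ) * ((beta (page b) + ((b.2 : ℂ) - (b.1 : ℂ))) -
      (beta (page b') + ((b'.2 : ℂ) - (b'.1 : ℂ))))) ≠ 1

namespace PlacedSkewShape

/-- The content function `c(b) = β_P + ct(b)` of the placed skew shape. -/
def c (P : PlacedSkewShape) (b : ℕ × ℕ) : ℂ :=
  P.beta (P.page b) + ((b.2 : ℂ) - (b.1 : ℂ))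

/-- `(q - q⁻¹) / (1 - q^{2(c(b) - c(b'))})` for a pair of boxes. -/
def pairA (P : PlacedSkewShape) (b b' : ℕ × ℕ) : ℂ :=
  (P.q - P.q⁻¹) / (1 - P.q ^ ((2 : ℂ) * (P.c b - P.c b')))

/-- The coefficient `ã_{i,j}(T) = (q - q⁻¹) / (1 - q^{2(c(T(i)) - c(T(j)))})`. -/
def aIJ (P : PlacedSkewShape) (f : (ℕ × ℕ) → ℕ) (i j : ℕ) : ℂ :=
  P.pairA (P.sh.boxOf f i) (P.sh.boxOf f j)

/-- The coefficient `ã_i(T) = ã_{i,i+1}(T)`. -/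
def aI (P : PlacedSkewShape) (f : (ℕ × ℕ) → ℕ) (i : ℕ) : ℂ := P.aIJ f i (i + 1)

/-- The seminormal operator of the affine Hecke algebra generator `T_i`:
`T_i v_T = ã_i(T) v_T + (q⁻¹ + ã_i(T)) v_{s_i(T)}`. -/
def heckeOp (P : PlacedSkewShape) (i : ℕ) :
    (P.sh.SYTt →₀ ℂ) →ₗ[ℂ] (P.sh.SYTt →₀ ℂ) :=
  Finsupp.lsum ℂ fun T : P.sh.SYTt =>
    LinearMap.toSpanSingleton ℂ _
      (P.aI T.1 i • P.sh.vOf T.1 + (P.q⁻¹ + P.aI T.1 i) • P.sh.vOf (sApply i T.1))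

/-- `heckeWord P [i_1, …, i_k] = T_{i_1} ∘ T_{i_2} ∘ ⋯ ∘ T_{i_k}`. -/
def heckeWord (P : PlacedSkewShape) : List ℕ → ((P.sh.SYTt →₀ ℂ) →ₗ[ℂ] (P.sh.SYTt →₀ ℂ))
  | [] => LinearMap.id
  | i :: is => P.heckeOp i ∘ₗ P.heckeWord is

/-- The `q`-weight of a subpath: the product of `ã_{i_j}(S_{j-1})` over waiting steps and
`q⁻¹ + ã_{i_j}(S_{j-1})` over moving steps. -/
def subWeight (P : PlacedSkewShape) : ((ℕ × ℕ) → ℕ) → List ℕ → List Bool → ℂ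
  | _, [], _ => 1
  | _, _ :: _, [] => 1
  | f, i :: is, z :: zs =>
      (if z then P.q⁻¹ + P.aI f i else P.aI f i) *
        P.subWeight (if z then sApply i f else f) is zs

/-- The transition coefficient `Ã_{S,T}` computed from a path: the sum of `q`-weights of
all subpaths of the path `(f₀, is)` terminating at `g`. -/
def pathCoeff (P : PlacedSkewShape) (f₀ : (ℕ × ℕ) → ℕ) (is : List ℕ)
    (g : (ℕ × ℕ) → ℕ) : ℂ :=
  ∑ zs : Fin is.length → Bool,
    if P.sh.IsSubpath f₀ is (List.ofFn zs) ∧ subEnd f₀ is (List.ofFn zs) = g then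
      P.subWeight f₀ is (List.ofFn zs)
    else 0

/-- The coefficient of `v_g` in `(T_{i_1} ∘ ⋯ ∘ T_{i_k})(v_C)` (or `0` if `g` is not
standard). -/
def natCoeff (P : PlacedSkewShape) (l : List ℕ) (g : (ℕ × ℕ) → ℕ) : ℂ :=
  if h : g ∈ P.sh.SYT then (P.heckeWord l (P.sh.vOf P.sh.colReading)) ⟨g, h⟩ else 0

end PlacedSkewShape

end

namespace HeckeAux

open Finset

def IsFix (n : ℕ) (w : Equiv.Perm ℕ) : Prop := ∀ m, m ∉ Finset.Icc 1 n → w m = m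

def invs (n : ℕ) (w : Equiv.Perm ℕ) : Finset (ℕ × ℕ) :=
  (Finset.Icc 1 n ×ˢ Finset.Icc 1 n).filter fun p => p.1 < p.2 ∧ w p.2 < w p.1

theorem IsFix.inv {n : ℕ} {w : Equiv.Perm ℕ} (h : IsFix n w) : IsFix n w⁻¹ := by
  intro m hm
  have := h m hm
  have : w⁻¹ (w m) = w⁻¹ m := by rw [this]
  simpa using this.symm

theorem IsFix.mem_Icc {n : ℕ} {w : Equiv.Perm ℕ} (h : IsFix n w) {a : ℕ}
    (ha : a ∈ Finset.Icc 1 n) : w a ∈ Finset.Icc 1 n := by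
  by_contra hc
  have h1 : w⁻¹ (w a) = w a := h.inv _ hc
  simp only [Equiv.Perm.coe_inv, Equiv.symm_apply_apply] at h1
  rw [← h1] at hc
  exact hc ha

theorem IsFix.one (n : ℕ) : IsFix n 1 := fun m _ => rfl

theorem card_invs_inv {n : ℕ} {w : Equiv.Perm ℕ} (h : IsFix n w) :
    (invs n w⁻¹).card = (invs n w).card := by
  apply Finset.card_bij (fun p _ => (w⁻¹ p.2, w⁻¹ p.1))
  · rintro ⟨a, b⟩ hp
    simp only [invs, mem_filter, mem_product, mem_Icc] at hp ⊢
    refine ⟨⟨?_, ?_⟩, hp.2.2, ?_⟩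
    · have := h.inv.mem_Icc (a := b) (by simp [mem_Icc]; omega); simpa [mem_Icc] using this
    · have := h.inv.mem_Icc (a := a) (by simp [mem_Icc]; omega); simpa [mem_Icc] using this
    · simpa using hp.2.1
  · rintro ⟨a, b⟩ h1 ⟨c, d⟩ h2 he
    simp only [Prod.mk.injEq] at he
    have h1 := w⁻¹.injective he.1
    have h2 := w⁻¹.injective he.2
    simp [Prod.ext_iff, h1, h2]
  · rintro ⟨a, b⟩ hp
    refine ⟨(w b, w a), ?_, ?_⟩
    · simp only [invs, mem_filter, mem_product, mem_Icc] at hp ⊢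
      refine ⟨⟨?_, ?_⟩, hp.2.2, by simpa using hp.2.1⟩
      · have := h.mem_Icc (a := b) (by simp [mem_Icc]; omega); simpa [mem_Icc] using this
      · have := h.mem_Icc (a := a) (by simp [mem_Icc]; omega); simpa [mem_Icc] using this
    · simp

theorem swap_lt_swap {i x y : ℕ} (hxy : x < y) (h : ¬(x = i ∧ y = i + 1)) :
    Equiv.swap i (i + 1) x < Equiv.swap i (i + 1) y := by
  simp only [Equiv.swap_apply_def]
  split_ifs <;> omega

theorem swap_mem_Icc {n i : ℕ} (hi1 : 1 ≤ i) (hin : i + 1 ≤ n) {a : ℕ}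
    (ha : a ∈ Finset.Icc 1 n) : Equiv.swap i (i + 1) a ∈ Finset.Icc 1 n := by
  simp only [Equiv.swap_apply_def, mem_Icc] at ha ⊢
  split_ifs <;> omega

theorem IsFix.mul_swap {n i : ℕ} {w : Equiv.Perm ℕ} (h : IsFix n w) (hi1 : 1 ≤ i)
    (hin : i + 1 ≤ n) : IsFix n (w * Equiv.swap i (i + 1)) := by
  intro m hm
  have hm' : ¬(1 ≤ m ∧ m ≤ n) := by simpa [mem_Icc] using hm
  have h1 : Equiv.swap i (i + 1) m = m := by
    apply Equiv.swap_apply_of_ne_of_ne <;> omega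
  simp only [Equiv.Perm.mul_apply, h1]
  exact h m hm

theorem IsFix.swap_mul {n i : ℕ} {w : Equiv.Perm ℕ} (h : IsFix n w) (hi1 : 1 ≤ i)
    (hin : i + 1 ≤ n) : IsFix n (Equiv.swap i (i + 1) * w) := by
  intro m hm
  have hm' : ¬(1 ≤ m ∧ m ≤ n) := by simpa [mem_Icc] using hm
  simp only [Equiv.Perm.mul_apply, h m hm]
  apply Equiv.swap_apply_of_ne_of_ne <;> omega

theorem invs_mul_swap {n i : ℕ} {w : Equiv.Perm ℕ} (hw : IsFix n w) (hi1 : 1 ≤ i)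
    (hin : i + 1 ≤ n) (h : w i < w (i + 1)) :
    invs n (w * Equiv.swap i (i + 1)) =
      insert (i, i + 1)
        ((invs n w).image fun p => (Equiv.swap i (i + 1) p.1, Equiv.swap i (i + 1) p.2)) := by
  set σ := Equiv.swap i (i + 1) with hσ
  ext ⟨a, b⟩
  simp only [invs, mem_filter, mem_product, mem_insert, mem_image, Prod.mk.injEq]
  simp only [Equiv.Perm.mul_apply]
  constructor
  · rintro ⟨⟨ha, hb⟩, hab, hinv⟩
    by_cases hpair : a = i ∧ b = i + 1
    · exact Or.inl ⟨hpair.1, hpair.2⟩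
    · refine Or.inr ⟨(σ a, σ b), ⟨⟨?_, ?_⟩, ?_, ?_⟩, ?_, ?_⟩
      · exact swap_mem_Icc hi1 hin ha
      · exact swap_mem_Icc hi1 hin hb
      · exact swap_lt_swap hab hpair
      · simpa [σ] using hinv
      · simp [σ]
      · simp [σ]
  · rintro (⟨ha, hb⟩ | ⟨⟨c, d⟩, ⟨⟨hc, hd⟩, hcd, hinv⟩, hca, hdb⟩)
    · subst ha; subst hb
      refine ⟨⟨?_, ?_⟩, by omega, ?_⟩
      · simp [mem_Icc]; omega
      · simp [mem_Icc]; omega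
      · simpa [σ, Equiv.swap_apply_left, Equiv.swap_apply_right] using h
    · subst hca; subst hdb
      have hne : ¬(c = i ∧ d = i + 1) := by
        rintro ⟨rfl, rfl⟩
        simp only at hinv
        omega
      refine ⟨⟨swap_mem_Icc hi1 hin hc, swap_mem_Icc hi1 hin hd⟩,
        swap_lt_swap hcd hne, ?_⟩
      simpa [σ] using hinv

theorem card_invs_mul_swap_of_lt {n i : ℕ} {w : Equiv.Perm ℕ} (hw : IsFix n w) (hi1 : 1 ≤ i)
    (hin : i + 1 ≤ n) (h : w i < w (i + 1)) :
    (invs n (w * Equiv.swap i (i + 1))).card = (invs n w).card + 1 := by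
  rw [invs_mul_swap hw hi1 hin h]
  rw [Finset.card_insert_of_notMem, Finset.card_image_of_injective]
  · intro p q hpq
    simp only [Prod.mk.injEq] at hpq
    have h1 := (Equiv.swap i (i+1)).injective hpq.1
    have h2 := (Equiv.swap i (i+1)).injective hpq.2
    exact Prod.ext h1 h2
  · simp only [mem_image, Prod.mk.injEq, not_exists, not_and]
    rintro ⟨c, d⟩ hcd h1 h2
    simp only at h1 h2
    have h1' : c = i + 1 := (Equiv.swap i (i+1)).injective (a₂ := i + 1) (by simpa using h1)
    have h2' : d = i := (Equiv.swap i (i+1)).injective (a₂ := i) (by simpa using h2)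
    subst h1'; subst h2'
    simp only [invs, mem_filter] at hcd
    omega

theorem card_invs_mul_swap_of_gt {n i : ℕ} {w : Equiv.Perm ℕ} (hw : IsFix n w) (hi1 : 1 ≤ i)
    (hin : i + 1 ≤ n) (h : w (i + 1) < w i) :
    (invs n (w * Equiv.swap i (i + 1))).card + 1 = (invs n w).card := by
  have h2 := card_invs_mul_swap_of_lt (hw.mul_swap hi1 hin) hi1 hin
    (by simp [Equiv.Perm.mul_apply, Equiv.swap_apply_left, Equiv.swap_apply_right, h])
  rw [mul_assoc, Equiv.swap_mul_self, mul_one] at h2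
  omega

end HeckeAux
namespace HeckeAux

open Finset

theorem card_invs_swap_mul_of_lt {n i : ℕ} {w : Equiv.Perm ℕ} (hw : IsFix n w) (hi1 : 1 ≤ i)
    (hin : i + 1 ≤ n) (h : w⁻¹ i < w⁻¹ (i + 1)) :
    (invs n (Equiv.swap i (i + 1) * w)).card = (invs n w).card + 1 := by
  have key : (Equiv.swap i (i + 1) * w)⁻¹ = w⁻¹ * Equiv.swap i (i + 1) := by
    rw [mul_inv_rev, Equiv.swap_inv]
  have h1 : (invs n (Equiv.swap i (i + 1) * w)).card
      = (invs n (w⁻¹ * Equiv.swap i (i + 1))).card := by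
    rw [← card_invs_inv (n := n) (w := Equiv.swap i (i + 1) * w) (hw.swap_mul hi1 hin), key]
  rw [h1, card_invs_mul_swap_of_lt hw.inv hi1 hin h, card_invs_inv hw]

theorem card_invs_swap_mul_of_gt {n i : ℕ} {w : Equiv.Perm ℕ} (hw : IsFix n w) (hi1 : 1 ≤ i)
    (hin : i + 1 ≤ n) (h : w⁻¹ (i + 1) < w⁻¹ i) :
    (invs n (Equiv.swap i (i + 1) * w)).card + 1 = (invs n w).card := by
  have hw' : IsFix n (Equiv.swap i (i + 1) * w) := hw.swap_mul hi1 hin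
  have h' : (Equiv.swap i (i + 1) * w)⁻¹ i < (Equiv.swap i (i + 1) * w)⁻¹ (i + 1) := by
    simp only [mul_inv_rev, Equiv.swap_inv, Equiv.Perm.mul_apply, Equiv.swap_apply_left,
      Equiv.swap_apply_right]
    exact h
  have := card_invs_swap_mul_of_lt hw' hi1 hin h'
  rw [← mul_assoc, Equiv.swap_mul_self, one_mul] at this
  omega

theorem wordProd_nil : wordProd [] = 1 := rfl

theorem wordProd_cons (i : ℕ) (l : List ℕ) :
    wordProd (i :: l) = Equiv.swap i (i + 1) * wordProd l := by
  simp [wordProd]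

theorem IsFix.wordProd {n : ℕ} {l : List ℕ} (hl : IsSnWord n l) : IsFix n (wordProd l) := by
  induction l with
  | nil => exact IsFix.one n
  | cons i l ih =>
    rw [wordProd_cons]
    have hi := hl i (by simp)
    exact (ih fun j hj => hl j (by simp [hj])).swap_mul hi.1 hi.2

theorem card_invs_wordProd_le {n : ℕ} {l : List ℕ} (hl : IsSnWord n l) :
    (invs n (wordProd l)).card ≤ l.length := by
  induction l with
  | nil =>
    have : invs n (wordProd []) = ∅ := by
      ext p; simp only [invs, wordProd_nil, Equiv.Perm.one_apply]; simp only [notMem_empty, iff_false]; intro hp; have := (Finset.mem_filter.mp hp).2; omega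
    simp [this]
  | cons i l ih =>
    have hi := hl i (by simp)
    have hl' : IsSnWord n l := fun j hj => hl j (by simp [hj])
    have hfix : IsFix n (wordProd l) := IsFix.wordProd hl'
    rw [wordProd_cons]
    rcases lt_trichotomy ((wordProd l)⁻¹ i) ((wordProd l)⁻¹ (i + 1)) with h | h | h
    · have := card_invs_swap_mul_of_lt hfix hi.1 hi.2 h
      have := ih hl'
      simp only [List.length_cons]
      omega
    · exact absurd ((wordProd l)⁻¹.injective h) (by omega)
    · have := card_invs_swap_mul_of_gt hfix hi.1 hi.2 h
      have := ih hl'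
      simp only [List.length_cons]
      omega

theorem le_self_of_monoOn {n : ℕ} {w : Equiv.Perm ℕ} (hw : IsFix n w)
    (hmono : ∀ a ∈ Finset.Icc 1 n, ∀ b ∈ Finset.Icc 1 n, a < b → w a < w b)
    {m : ℕ} (hm : m ∈ Finset.Icc 1 n) : m ≤ w m := by
  have hmap : ∀ a ∈ Finset.Icc 1 m, w a ∈ Finset.Icc 1 (w m) := by
    intro a ha
    simp only [mem_Icc] at ha hm ⊢
    have haI : a ∈ Finset.Icc 1 n := by simp [mem_Icc]; omega
    have h1 : 1 ≤ w a := by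
      have := hw.mem_Icc haI; simp [mem_Icc] at this; omega
    rcases eq_or_lt_of_le ha.2 with h | h
    · subst h; omega
    · exact ⟨h1, le_of_lt (hmono a haI m (by simp [mem_Icc]; omega) h)⟩
  have hinj : Set.InjOn w ↑(Finset.Icc 1 m) := fun a _ b _ hab => w.injective hab
  have := Finset.card_le_card_of_injOn w hmap hinj
  simp only [Nat.card_Icc] at this
  omega

theorem eq_one_of_invs_empty {n : ℕ} {w : Equiv.Perm ℕ} (hw : IsFix n w)
    (h : invs n w = ∅) : w = 1 := by
  have hmono : ∀ a ∈ Finset.Icc 1 n, ∀ b ∈ Finset.Icc 1 n, a < b → w a < w b := by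
    intro a ha b hb hab
    have hne : w a ≠ w b := fun hc => by have := w.injective hc; omega
    have : (a, b) ∉ invs n w := by rw [h]; exact notMem_empty _
    simp only [invs, mem_filter, mem_product] at this
    push_neg at this
    have := this ⟨ha, hb⟩ hab
    omega
  have hmono' : ∀ a ∈ Finset.Icc 1 n, ∀ b ∈ Finset.Icc 1 n, a < b → w⁻¹ a < w⁻¹ b := by
    intro a ha b hb hab
    rcases lt_trichotomy (w⁻¹ a) (w⁻¹ b) with hc | hc | hc
    · exact hc
    · exact absurd (w⁻¹.injective hc) (by omega)
    · have := hmono _ (hw.inv.mem_Icc hb) _ (hw.inv.mem_Icc ha) hc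
      simp only [Equiv.Perm.coe_inv, Equiv.apply_symm_apply] at this
      omega
  ext m
  by_cases hm : m ∈ Finset.Icc 1 n
  · have h1 := le_self_of_monoOn hw hmono hm
    have h2 := le_self_of_monoOn hw.inv hmono' hm
    have h3 : w (w⁻¹ m) = m := w.apply_symm_apply m
    have h4 : w m ≤ w m := le_refl _
    -- from m ≤ w⁻¹ m and monotonicity: w m ≤ w (w⁻¹ m) = m
    rcases eq_or_lt_of_le h2 with hc | hc
    · simp only [Equiv.Perm.one_apply]
      rw [← hc] at h3
      omega
    · have := hmono m hm _ (hw.inv.mem_Icc hm) hc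
      rw [h3] at this
      simp only [Equiv.Perm.one_apply]
      omega
  · simp [hw m hm]

theorem exists_adjacent_descent {n : ℕ} {w : Equiv.Perm ℕ} (hw : IsFix n w)
    (h : (invs n w).Nonempty) :
    ∃ i, 1 ≤ i ∧ i + 1 ≤ n ∧ w (i + 1) < w i := by
  obtain ⟨⟨a, b⟩, hp⟩ := h
  simp only [invs, mem_filter, mem_product, mem_Icc] at hp
  obtain ⟨⟨ha, hb⟩, hab, hinv⟩ := hp
  by_contra hc
  push_neg at hc
  have chain : ∀ d : ℕ, a + d ≤ b → w a ≤ w (a + d) := by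
    intro d
    induction d with
    | zero => simp
    | succ d ih =>
      intro hd
      have h1 := ih (by omega)
      have h2 := hc (a + d) (by omega) (by omega)
      have : a + (d + 1) = (a + d) + 1 := by omega
      rw [this]
      omega
  have := chain (b - a) (by omega)
  have hba : a + (b - a) = b := by omega
  rw [hba] at this
  omega

theorem exists_word_card {n : ℕ} : ∀ k (w : Equiv.Perm ℕ), IsFix n w →
    (invs n w).card = k →
    ∃ l : List ℕ, IsSnWord n l ∧ wordProd l = w ∧ l.length = k := by
  intro k
  induction k using Nat.strong_induction_on with
  | _ k ih =>
    intro w hw hk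
    rcases Nat.eq_zero_or_pos k with rfl | hkpos
    · have : invs n w = ∅ := Finset.card_eq_zero.mp hk
      refine ⟨[], fun i hi => absurd hi List.not_mem_nil, ?_, rfl⟩
      rw [wordProd_nil, eq_one_of_invs_empty hw this]
    · have hne : (invs n w).Nonempty := Finset.card_pos.mp (by omega)
      obtain ⟨i, hi1, hin, hdesc⟩ := exists_adjacent_descent hw hne
      have hfix' : IsFix n (w * Equiv.swap i (i + 1)) := hw.mul_swap hi1 hin
      have hcard := card_invs_mul_swap_of_gt hw hi1 hin hdesc
      obtain ⟨l, hl1, hl2, hl3⟩ := ih (k - 1) (by omega) (w * Equiv.swap i (i + 1)) hfix'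
        (by omega)
      refine ⟨l ++ [i], ?_, ?_, by simp [hl3]; omega⟩
      · intro j hj
        rcases List.mem_append.mp hj with hj | hj
        · exact hl1 j hj
        · simp at hj; subst hj; exact ⟨hi1, hin⟩
      · have : wordProd (l ++ [i]) = wordProd l * Equiv.swap i (i + 1) := by
          simp [wordProd]
        rw [this, hl2, mul_assoc, Equiv.swap_mul_self, mul_one]

theorem reduced_length_eq {n : ℕ} {w : Equiv.Perm ℕ} {l : List ℕ}
    (hl : IsReducedWord n w l) : l.length = (invs n w).card := by
  have hfix : IsFix n w := hl.2.1 ▸ IsFix.wordProd hl.1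
  obtain ⟨l', hl'1, hl'2, hl'3⟩ := exists_word_card (invs n w).card w hfix rfl
  have h1 : l.length ≤ l'.length := hl.2.2 l' hl'1 hl'2
  have h2 : (invs n w).card ≤ l.length := hl.2.1 ▸ card_invs_wordProd_le hl.1
  omega

end HeckeAux
namespace HeckeAux

open Finset SkewShape

theorem colLt_trans {a b c : ℕ × ℕ} (h1 : colLt a b) (h2 : colLt b c) : colLt a c := by
  unfold colLt at *; omega

theorem colLt_irrefl (a : ℕ × ℕ) : ¬ colLt a a := by unfold colLt; omega

theorem colLt_trichotomy {a b : ℕ × ℕ} (h : a ≠ b) : colLt a b ∨ colLt b a := by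
  rcases a with ⟨x, y⟩; rcases b with ⟨x', y'⟩
  have : ¬(x = x' ∧ y = y') := fun ⟨h1, h2⟩ => h (by simp [h1, h2])
  unfold colLt; simp only; omega

theorem colReading_lt (sh : SkewShape) {b b' : ℕ × ℕ} (hb : b ∈ sh.cells)
    (hb' : b' ∈ sh.cells) (h : colLt b b') : sh.colReading b < sh.colReading b' := by
  unfold SkewShape.colReading
  rw [if_pos hb, if_pos hb']
  have hsub : sh.cells.filter (fun c => colLt c b) ⊂ sh.cells.filter (fun c => colLt c b') := by
    constructor
    · intro c hc
      simp only [mem_filter] at hc ⊢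
      exact ⟨hc.1, colLt_trans hc.2 h⟩
    · intro hc
      have : b ∈ sh.cells.filter (fun c => colLt c b) := hc (by simp [mem_filter, hb, h])
      simp only [mem_filter] at this
      exact colLt_irrefl b this.2
  have := Finset.card_lt_card hsub
  omega

theorem colReading_mem (sh : SkewShape) {b : ℕ × ℕ} (hb : b ∈ sh.cells) :
    sh.colReading b ∈ Finset.Icc 1 sh.nb := by
  unfold SkewShape.colReading
  rw [if_pos hb]
  have hsub : sh.cells.filter (fun c => colLt c b) ⊂ sh.cells := by
    constructor
    · exact Finset.filter_subset _ _
    · intro hc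
      have : b ∈ sh.cells.filter (fun c => colLt c b) := hc hb
      simp only [mem_filter] at this
      exact colLt_irrefl b this.2
  have := Finset.card_lt_card hsub
  simp only [mem_Icc, SkewShape.nb]
  omega

theorem colReading_injOn (sh : SkewShape) : Set.InjOn sh.colReading ↑sh.cells := by
  intro a ha b hb hab
  by_contra hne
  rcases colLt_trichotomy hne with h | h
  · exact absurd hab (by have := colReading_lt sh ha hb h; omega)
  · exact absurd hab (by have := colReading_lt sh hb ha h; omega)

theorem colReading_bijOn (sh : SkewShape) :
    Set.BijOn sh.colReading ↑sh.cells ↑(Finset.Icc 1 sh.nb) := by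
  refine ⟨fun b hb => colReading_mem sh hb, colReading_injOn sh, ?_⟩
  have himg : sh.cells.image sh.colReading = Finset.Icc 1 sh.nb := by
    apply Finset.eq_of_subset_of_card_le
    · intro k hk
      simp only [mem_image] at hk
      obtain ⟨b, hb, rfl⟩ := hk
      exact colReading_mem sh hb
    · rw [Finset.card_image_of_injOn (by exact_mod_cast colReading_injOn sh)]
      simp [SkewShape.nb]
  intro k hk
  have : k ∈ sh.cells.image sh.colReading := by
    rw [himg]; exact_mod_cast hk
  simp only [mem_image] at this
  obtain ⟨b, hb, rfl⟩ := this
  exact ⟨b, by exact_mod_cast hb, rfl⟩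

theorem cells_mem_between (sh : SkewShape) {x' y' x y x'' y'' : ℕ}
    (hb' : (x', y') ∈ sh.cells) (hb : (x, y) ∈ sh.cells)
    (h1 : x'' ≤ x) (h2 : y'' ≤ y) (h3 : x' ≤ x'') (h4 : y' ≤ y'') :
    (x'', y'') ∈ sh.cells := by
  simp only [SkewShape.cells, mem_sdiff] at hb hb' ⊢
  constructor
  · exact sh.lam.up_left_mem h1 h2 hb.1
  · intro hc
    exact hb'.2 (sh.mu.up_left_mem h3 h4 hc)

theorem row_chain (sh : SkewShape) {f : ℕ × ℕ → ℕ} (hstd : sh.IsRowColStrict f)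
    {x y1 y2 : ℕ} (h1 : (x, y1) ∈ sh.cells) (h2 : (x, y2) ∈ sh.cells) (h : y1 < y2) :
    f (x, y1) < f (x, y2) := by
  obtain ⟨d, rfl⟩ : ∃ d, y2 = y1 + d + 1 := ⟨y2 - y1 - 1, by omega⟩
  clear h
  induction d with
  | zero =>
    exact hstd.1 x y1 h1 h2
  | succ d ih =>
    have h2' : (x, y1 + d + 1 + 1) ∈ sh.cells := h2
    have hmid : (x, y1 + d + 1) ∈ sh.cells :=
      cells_mem_between sh h1 h2' (le_refl x) (by omega) (le_refl x) (by omega)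
    have ha := hstd.1 x (y1 + d + 1) hmid h2'
    have hb := ih hmid
    show f (x, y1) < f (x, y1 + d + 1 + 1)
    omega

theorem col_chain (sh : SkewShape) {f : ℕ × ℕ → ℕ} (hstd : sh.IsRowColStrict f)
    {x1 x2 y : ℕ} (h1 : (x1, y) ∈ sh.cells) (h2 : (x2, y) ∈ sh.cells) (h : x1 < x2) :
    f (x1, y) < f (x2, y) := by
  obtain ⟨d, rfl⟩ : ∃ d, x2 = x1 + d + 1 := ⟨x2 - x1 - 1, by omega⟩
  clear h
  induction d with
  | zero =>
    exact hstd.2 x1 y h1 h2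
  | succ d ih =>
    have h2' : (x1 + d + 1 + 1, y) ∈ sh.cells := h2
    have hmid : (x1 + d + 1, y) ∈ sh.cells :=
      cells_mem_between sh h1 h2' (by omega) (le_refl y) (by omega) (le_refl y)
    have ha := hstd.2 (x1 + d + 1) y hmid h2'
    have hb := ih hmid
    show f (x1, y) < f (x1 + d + 1 + 1, y)
    omega

theorem boxOf_mem_and_eq (sh : SkewShape) {f : ℕ × ℕ → ℕ} (hfill : sh.IsFilling f)
    {k : ℕ} (hk : k ∈ Finset.Icc 1 sh.nb) :
    sh.boxOf f k ∈ sh.cells ∧ f (sh.boxOf f k) = k := by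
  have hsurj := hfill.1.2.2
  have hex : ∃ b ∈ (↑sh.cells : Set (ℕ × ℕ)), f b = k := by
    have := hsurj (by exact_mod_cast hk : k ∈ (↑(Finset.Icc 1 sh.nb) : Set ℕ))
    obtain ⟨b, hb, hbk⟩ := this
    exact ⟨b, hb, hbk⟩
  exact ⟨by exact_mod_cast Function.invFunOn_mem hex, Function.invFunOn_eq hex⟩

theorem boxOf_eq_self (sh : SkewShape) {f : ℕ × ℕ → ℕ} (hfill : sh.IsFilling f)
    {b : ℕ × ℕ} (hb : b ∈ sh.cells) : sh.boxOf f (f b) = b := by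
  have hk : f b ∈ Finset.Icc 1 sh.nb := by
    have := hfill.1.1 (by exact_mod_cast hb : b ∈ (↑sh.cells : Set (ℕ × ℕ)))
    exact_mod_cast this
  obtain ⟨hmem, heq⟩ := boxOf_mem_and_eq sh hfill hk
  exact hfill.1.2.1 (by exact_mod_cast hmem) (by exact_mod_cast hb) heq

end HeckeAux
namespace HeckeAux

open Finset SkewShape

theorem mem_SYT_iff (sh : SkewShape) (f : (ℕ × ℕ) → ℕ) :
    f ∈ sh.SYT ↔ sh.IsFilling f ∧ sh.IsRowColStrict f := Iff.rfl

theorem sApply_sApply (i : ℕ) (f : (ℕ × ℕ) → ℕ) : sApply i (sApply i f) = f := by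
  funext b
  simp [sApply, Equiv.swap_apply_self]

theorem isWordOf_sApply (sh : SkewShape) {f : (ℕ × ℕ) → ℕ} {w : Equiv.Perm ℕ} {i : ℕ}
    (hw : sh.IsWordOf f w) (hi1 : 1 ≤ i) (hin : i + 1 ≤ sh.nb) :
    sh.IsWordOf (sApply i f) (Equiv.swap i (i + 1) * w) := by
  constructor
  · intro b hb
    simp only [Equiv.Perm.mul_apply, hw.1 b hb, sApply]
  · intro m hm
    have hm' : ¬(1 ≤ m ∧ m ≤ sh.nb) := by simpa [mem_Icc] using hm
    simp only [Equiv.Perm.mul_apply, hw.2 m hm]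
    apply Equiv.swap_apply_of_ne_of_ne <;> omega

theorem isFix_of_isWordOf (sh : SkewShape) {f : (ℕ × ℕ) → ℕ} {w : Equiv.Perm ℕ}
    (hw : sh.IsWordOf f w) : IsFix sh.nb w := hw.2

theorem key_pos (sh : SkewShape) {T : (ℕ × ℕ) → ℕ} {w : Equiv.Perm ℕ} {i : ℕ}
    (hT : T ∈ sh.SYT) (hw : sh.IsWordOf T w) (hi1 : 1 ≤ i) (hin : i + 1 ≤ sh.nb)
    (hdesc : w⁻¹ (i + 1) < w⁻¹ i) :
    (sh.boxOf T i).1 < (sh.boxOf T (i + 1)).1 ∧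
      (sh.boxOf T (i + 1)).2 < (sh.boxOf T i).2 := by
  obtain ⟨hfill, hstd⟩ := hT
  have hiI : i ∈ Finset.Icc 1 sh.nb := by simp [mem_Icc]; omega
  have hi1I : i + 1 ∈ Finset.Icc 1 sh.nb := by simp [mem_Icc]; omega
  obtain ⟨hbmem, hbeq⟩ := boxOf_mem_and_eq sh hfill hiI
  obtain ⟨hb'mem, hb'eq⟩ := boxOf_mem_and_eq sh hfill hi1I
  set b := sh.boxOf T i with hbdef
  set b' := sh.boxOf T (i + 1) with hb'def
  -- C b = w⁻¹ i, C b' = w⁻¹ (i+1)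
  have hCb : sh.colReading b = w⁻¹ i := by
    have h0 := hw.1 b hbmem
    rw [hbeq] at h0
    have := congrArg (fun t => w⁻¹ t) h0
    simpa using this
  have hCb' : sh.colReading b' = w⁻¹ (i + 1) := by
    have h0 := hw.1 b' hb'mem
    rw [hb'eq] at h0
    have := congrArg (fun t => w⁻¹ t) h0
    simpa using this
  have hne : b ≠ b' := by
    intro hc
    rw [hc, hb'eq] at hbeq
    omega
  have hcolLt : colLt b' b := by
    rcases colLt_trichotomy hne with h | h
    · have := colReading_lt sh hbmem hb'mem h
      omega
    · exact h
  have hbmem' : (b.1, b.2) ∈ sh.cells := by rwa [Prod.mk.eta]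
  have hb'mem' : (b'.1, b'.2) ∈ sh.cells := by rwa [Prod.mk.eta]
  -- column comparison
  have hcol : b'.2 < b.2 := by
    rcases hcolLt with h | ⟨hc, hr⟩
    · exact h
    · exfalso
      have he : (b'.1, b.2) = b' := Prod.ext rfl hc.symm
      have hlt := col_chain sh hstd (he ▸ hb'mem) hbmem' hr
      rw [he, Prod.mk.eta] at hlt
      rw [hbeq, hb'eq] at hlt
      omega
  -- row comparison
  have hrow : b.1 < b'.1 := by
    by_contra hc
    push_neg at hc
    rcases eq_or_lt_of_le hc with h | h
    · have he : (b.1, b'.2) = b' := Prod.ext h.symm rfl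
      have hlt := row_chain sh hstd (he ▸ hb'mem) hbmem' hcol
      rw [he, Prod.mk.eta] at hlt
      rw [hbeq, hb'eq] at hlt
      omega
    · -- b'.1 < b.1, b'.2 < b.2 : corner (b'.1, b.2)
      have hcorner : (b'.1, b.2) ∈ sh.cells :=
        cells_mem_between sh hb'mem' hbmem' (by omega) (le_refl _) (le_refl _) (by omega)
      have h1 : T (b'.1, b'.2) < T (b'.1, b.2) :=
        row_chain sh hstd hb'mem' hcorner hcol
      have h2 : T (b'.1, b.2) < T (b.1, b.2) :=
        col_chain sh hstd hcorner hbmem' h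
      rw [Prod.mk.eta] at h1
      rw [Prod.mk.eta] at h2
      rw [hbeq] at h2
      rw [hb'eq] at h1
      omega
  exact ⟨hrow, hcol⟩

theorem sApply_mem_SYT (sh : SkewShape) {T : (ℕ × ℕ) → ℕ} {i : ℕ}
    (hT : T ∈ sh.SYT) (hi1 : 1 ≤ i) (hin : i + 1 ≤ sh.nb)
    (hrow : (sh.boxOf T i).1 < (sh.boxOf T (i + 1)).1)
    (hcol : (sh.boxOf T (i + 1)).2 < (sh.boxOf T i).2) :
    sApply i T ∈ sh.SYT := by
  obtain ⟨hfill, hstd⟩ := hT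
  have hiI : i ∈ Finset.Icc 1 sh.nb := by simp [mem_Icc]; omega
  have hi1I : i + 1 ∈ Finset.Icc 1 sh.nb := by simp [mem_Icc]; omega
  have hswap_bij : Set.BijOn (Equiv.swap i (i + 1)) ↑(Finset.Icc 1 sh.nb)
      ↑(Finset.Icc 1 sh.nb) := by
    refine ⟨fun a ha => ?_, fun a _ b _ hab => (Equiv.swap i (i + 1)).injective hab,
      fun k hk => ?_⟩
    · exact_mod_cast swap_mem_Icc hi1 hin (by exact_mod_cast ha)
    · refine ⟨Equiv.swap i (i + 1) k, ?_, Equiv.swap_apply_self i (i + 1) k⟩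
      exact_mod_cast swap_mem_Icc hi1 hin (by exact_mod_cast hk)
  have hcomp : sApply i T = (fun a => Equiv.swap i (i + 1) a) ∘ T := rfl
  constructor
  · constructor
    · rw [hcomp]
      exact Set.BijOn.comp hswap_bij hfill.1
    · intro b hb
      simp only [sApply, hfill.2 b hb]
      apply Equiv.swap_apply_of_ne_of_ne <;> omega
  · -- row/col strict
    have hkey : ∀ c c' : ℕ × ℕ, c ∈ sh.cells → c' ∈ sh.cells → T c < T c' →
        (c.1 = c'.1 ∨ c.2 = c'.2) → Equiv.swap i (i + 1) (T c) < Equiv.swap i (i + 1) (T c') := by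
      intro c c' hc hc' hlt hline
      apply swap_lt_swap hlt
      rintro ⟨h1, h2⟩
      have hcb : c = sh.boxOf T i := by rw [← h1, boxOf_eq_self sh hfill hc]
      have hcb' : c' = sh.boxOf T (i + 1) := by rw [← h2, boxOf_eq_self sh hfill hc']
      rcases hline with h | h
      · rw [hcb, hcb'] at h; omega
      · rw [hcb, hcb'] at h; omega
    constructor
    · intro x y h1 h2
      exact hkey (x, y) (x, y + 1) h1 h2 (hstd.1 x y h1 h2) (Or.inl rfl)
    · intro x y h1 h2
      exact hkey (x, y) (x + 1, y) h1 h2 (hstd.2 x y h1 h2) (Or.inr rfl)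

theorem boxOf_sApply (sh : SkewShape) {T : (ℕ × ℕ) → ℕ} {i : ℕ}
    (hfill : sh.IsFilling T) (hfill' : sh.IsFilling (sApply i T))
    (hi1 : 1 ≤ i) (hin : i + 1 ≤ sh.nb) {m : ℕ} (hm : m ∈ Finset.Icc 1 sh.nb) :
    sh.boxOf (sApply i T) m = sh.boxOf T (Equiv.swap i (i + 1) m) := by
  have hσm : Equiv.swap i (i + 1) m ∈ Finset.Icc 1 sh.nb :=
    swap_mem_Icc hi1 hin hm
  obtain ⟨hmem, heq⟩ := boxOf_mem_and_eq sh hfill hσm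
  have h1 : sApply i T (sh.boxOf T (Equiv.swap i (i + 1) m)) = m := by
    simp [sApply, heq, Equiv.swap_apply_self]
  have h2 := boxOf_eq_self sh hfill' hmem
  rw [h1] at h2
  exact h2

end HeckeAux
namespace HeckeAux

open Finset SkewShape

theorem invSet_eq_empty (sh : SkewShape) {T : (ℕ × ℕ) → ℕ} (hT : T ∈ sh.SYT)
    (hC : ∀ b ∈ sh.cells, T b = sh.colReading b) : sh.invSet T = ∅ := by
  ext ⟨a, b⟩
  simp only [invSet, mem_filter, mem_product, notMem_empty, iff_false, not_and]
  rintro ⟨ha, hb⟩ hba hgeo1 hgeo2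
  obtain ⟨hfill, hstd⟩ := hT
  obtain ⟨hamem, haeq⟩ := boxOf_mem_and_eq sh hfill ha
  obtain ⟨hbmem, hbeq⟩ := boxOf_mem_and_eq sh hfill hb
  have hlt : colLt (sh.boxOf T a) (sh.boxOf T b) := Or.inl hgeo2
  have := colReading_lt sh hamem hbmem hlt
  rw [← hC _ hamem, ← hC _ hbmem, haeq, hbeq] at this
  omega

theorem invSet_step (sh : SkewShape) {T : (ℕ × ℕ) → ℕ} {i : ℕ}
    (hfill : sh.IsFilling T) (hfill' : sh.IsFilling (sApply i T))
    (hi1 : 1 ≤ i) (hin : i + 1 ≤ sh.nb)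
    (hrow : (sh.boxOf T i).1 < (sh.boxOf T (i + 1)).1)
    (hcol : (sh.boxOf T (i + 1)).2 < (sh.boxOf T i).2) :
    sh.invSet T = insert (i + 1, i)
      ((sh.invSet (sApply i T)).image fun p =>
        (Equiv.swap i (i + 1) p.1, Equiv.swap i (i + 1) p.2)) := by
  have hiI : i ∈ Finset.Icc 1 sh.nb := by simp [mem_Icc]; omega
  have hi1I : i + 1 ∈ Finset.Icc 1 sh.nb := by simp [mem_Icc]; omega
  have hbox : ∀ m ∈ Finset.Icc 1 sh.nb,
      sh.boxOf (sApply i T) m = sh.boxOf T (Equiv.swap i (i + 1) m) := fun m hm =>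
    boxOf_sApply sh hfill hfill' hi1 hin hm
  ext ⟨a, b⟩
  simp only [invSet, mem_filter, mem_product, mem_insert, mem_image, Prod.mk.injEq]
  constructor
  · rintro ⟨⟨ha, hb⟩, hba, hgeo1, hgeo2⟩
    by_cases hpair : a = i + 1 ∧ b = i
    · exact Or.inl ⟨hpair.1, hpair.2⟩
    · refine Or.inr ⟨(Equiv.swap i (i + 1) a, Equiv.swap i (i + 1) b),
        ⟨⟨swap_mem_Icc hi1 hin ha, swap_mem_Icc hi1 hin hb⟩, ?_, ?_, ?_⟩, ?_, ?_⟩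
      · apply swap_lt_swap hba
        rintro ⟨rfl, rfl⟩
        exact hpair ⟨rfl, rfl⟩
      · rw [hbox _ (swap_mem_Icc hi1 hin hb), hbox _ (swap_mem_Icc hi1 hin ha),
          Equiv.swap_apply_self, Equiv.swap_apply_self]
        exact hgeo1
      · rw [hbox _ (swap_mem_Icc hi1 hin hb), hbox _ (swap_mem_Icc hi1 hin ha),
          Equiv.swap_apply_self, Equiv.swap_apply_self]
        exact hgeo2
      · exact Equiv.swap_apply_self _ _ _
      · exact Equiv.swap_apply_self _ _ _
  · rintro (⟨rfl, rfl⟩ | ⟨⟨c, d⟩, ⟨⟨hc, hd⟩, hdc, hgeo1, hgeo2⟩, hca, hdb⟩)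
    · exact ⟨⟨hi1I, hiI⟩, by omega, hrow, hcol⟩
    · subst hca; subst hdb
      simp only at hgeo1 hgeo2 ⊢
      have hne : ¬(d = i ∧ c = i + 1) := by
        rintro ⟨rfl, rfl⟩
        rw [hbox _ hd, hbox _ hc, Equiv.swap_apply_left, Equiv.swap_apply_right] at hgeo1
        omega
      refine ⟨⟨swap_mem_Icc hi1 hin hc, swap_mem_Icc hi1 hin hd⟩,
        swap_lt_swap hdc hne, ?_, ?_⟩
      · rw [← hbox _ hd, ← hbox _ hc]
        exact hgeo1
      · rw [← hbox _ hd, ← hbox _ hc]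
        exact hgeo2

end HeckeAux
namespace HeckeAux

open Finset SkewShape

theorem sApply_eq_iff {i : ℕ} {f g : (ℕ × ℕ) → ℕ} : sApply i f = g ↔ f = sApply i g := by
  constructor
  · rintro rfl; rw [sApply_sApply]
  · rintro rfl; rw [sApply_sApply]

theorem mk_eq_iff {sh : SkewShape} {a b : (ℕ × ℕ) → ℕ} {ha : a ∈ sh.SYT} {hb : b ∈ sh.SYT} :
    (⟨a, ha⟩ : sh.SYTt) = ⟨b, hb⟩ ↔ a = b :=
  ⟨fun h => congrArg Subtype.val h, fun h => Subtype.ext h⟩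

theorem vOf_apply (sh : SkewShape) (f : (ℕ × ℕ) → ℕ) {Sf : (ℕ × ℕ) → ℕ}
    (hSf : Sf ∈ sh.SYT) :
    sh.vOf f ⟨Sf, hSf⟩ = if Sf = f then 1 else 0 := by
  by_cases h : f ∈ sh.SYT
  · rw [SkewShape.vOf, dif_pos h]
    delta SkewShape.SYTt
    rw [Finsupp.single_apply]
    by_cases he : Sf = f
    · rw [if_pos (Subtype.ext he.symm), if_pos he]
    · rw [if_neg (fun hc => he (congrArg Subtype.val hc).symm), if_neg he]
  · rw [SkewShape.vOf, dif_neg h]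
    delta SkewShape.SYTt
    rw [Finsupp.zero_apply]
    have hne : Sf ≠ f := fun hc => h (hc ▸ hSf)
    rw [if_neg hne]

theorem heckeOp_apply (P : PlacedSkewShape) (i : ℕ) (X : P.sh.SYTt →₀ ℂ)
    {g : (ℕ × ℕ) → ℕ} (hg : g ∈ P.sh.SYT) :
    (P.heckeOp i X) ⟨g, hg⟩ = P.aI g i * X ⟨g, hg⟩ +
      (if h' : sApply i g ∈ P.sh.SYT then
        (P.q⁻¹ + P.aI (sApply i g) i) * X ⟨sApply i g, h'⟩ else 0) := by
  induction X using Finsupp.induction_linear with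
  | zero =>
    erw [map_zero, Finsupp.zero_apply]
    by_cases h' : sApply i g ∈ P.sh.SYT
    · erw [dif_pos h', Finsupp.zero_apply]; ring
    · erw [dif_neg h']; ring
  | add X Y hX hY =>
    erw [map_add, Finsupp.add_apply, hX, hY]
    by_cases h' : sApply i g ∈ P.sh.SYT
    · rw [dif_pos h', dif_pos h', dif_pos h']
      erw [Finsupp.add_apply X Y ⟨g, hg⟩, Finsupp.add_apply X Y ⟨sApply i g, h'⟩]
      ring
    · rw [dif_neg h', dif_neg h', dif_neg h']
      erw [Finsupp.add_apply X Y ⟨g, hg⟩]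
      ring
  | single S c =>
    rcases S with ⟨Sf, hSf⟩
    erw [PlacedSkewShape.heckeOp, Finsupp.lsum_single, LinearMap.toSpanSingleton_apply,
      Finsupp.add_apply, Finsupp.smul_apply, Finsupp.smul_apply,
      vOf_apply P.sh Sf hg, vOf_apply P.sh (sApply i Sf) hg]
    erw [Finsupp.single_apply (a := (⟨Sf, hSf⟩ : P.sh.SYTt)) (a' := (⟨g, hg⟩ : P.sh.SYTt))]
    simp only [smul_eq_mul]
    have hiff : (g = sApply i Sf) ↔ (Sf = sApply i g) :=
      ⟨fun h => sApply_eq_iff.mp h.symm, fun h => (sApply_eq_iff.mp h.symm)⟩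
    by_cases h' : sApply i g ∈ P.sh.SYT
    · rw [dif_pos h']
      erw [Finsupp.single_apply (a := (⟨Sf, hSf⟩ : P.sh.SYTt)) (a' := (⟨sApply i g, h'⟩ : P.sh.SYTt))]
      by_cases h2 : Sf = sApply i g
      · rw [if_pos (hiff.mpr h2), if_pos (show (⟨Sf, hSf⟩ : P.sh.SYTt) = ⟨sApply i g, h'⟩ from Subtype.ext h2)]
        have ha : P.aI (sApply i g) i = P.aI Sf i := by rw [← h2]
        rw [ha]
        by_cases h1 : Sf = g
        · rw [if_pos h1.symm, if_pos (show (⟨Sf, hSf⟩ : P.sh.SYTt) = ⟨g, hg⟩ from Subtype.ext h1)]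
          rw [h1]
          ring
        · rw [if_neg (fun hc => h1 hc.symm), if_neg (show ¬((⟨Sf, hSf⟩ : P.sh.SYTt) = ⟨g, hg⟩) from fun hc => h1 (congrArg Subtype.val hc))]
          ring
      · rw [if_neg (fun hc => h2 (hiff.mp hc)), if_neg (show ¬((⟨Sf, hSf⟩ : P.sh.SYTt) = ⟨sApply i g, h'⟩) from fun hc => h2 (congrArg Subtype.val hc))]
        by_cases h1 : Sf = g
        · rw [if_pos h1.symm, if_pos (show (⟨Sf, hSf⟩ : P.sh.SYTt) = ⟨g, hg⟩ from Subtype.ext h1)]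
          rw [h1]
          ring
        · rw [if_neg (fun hc => h1 hc.symm), if_neg (show ¬((⟨Sf, hSf⟩ : P.sh.SYTt) = ⟨g, hg⟩) from fun hc => h1 (congrArg Subtype.val hc))]
          ring
    · rw [dif_neg h']
      have h2 : ¬ g = sApply i Sf := fun hc => h' ((hiff.mp hc) ▸ hSf)
      rw [if_neg h2]
      by_cases h1 : Sf = g
      · rw [if_pos h1.symm, if_pos (show (⟨Sf, hSf⟩ : P.sh.SYTt) = ⟨g, hg⟩ from Subtype.ext h1)]
        rw [h1]
        ring
      · rw [if_neg (fun hc => h1 hc.symm), if_neg (show ¬((⟨Sf, hSf⟩ : P.sh.SYTt) = ⟨g, hg⟩) from fun hc => h1 (congrArg Subtype.val hc))]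
        ring

theorem natCoeff_cons (P : PlacedSkewShape) (i : ℕ) (l : List ℕ) {g : (ℕ × ℕ) → ℕ}
    (hg : g ∈ P.sh.SYT) :
    P.natCoeff (i :: l) g = P.aI g i * P.natCoeff l g +
      (P.q⁻¹ + P.aI (sApply i g) i) * P.natCoeff l (sApply i g) := by
  rw [PlacedSkewShape.natCoeff, dif_pos hg]
  have hword : P.heckeWord (i :: l) (P.sh.vOf P.sh.colReading)
      = P.heckeOp i (P.heckeWord l (P.sh.vOf P.sh.colReading)) := rfl
  rw [hword, heckeOp_apply P i _ hg]
  congr 1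
  · rw [PlacedSkewShape.natCoeff, dif_pos hg]
  · by_cases h' : sApply i g ∈ P.sh.SYT
    · rw [dif_pos h', PlacedSkewShape.natCoeff, dif_pos h']
    · rw [dif_neg h', PlacedSkewShape.natCoeff, dif_neg h', mul_zero]

end HeckeAux
namespace HeckeAux

open Finset SkewShape

theorem natCoeff_vanish (P : PlacedSkewShape) :
    ∀ (l : List ℕ) (g : (ℕ × ℕ) → ℕ) (w : Equiv.Perm ℕ), IsSnWord P.sh.nb l →
      g ∈ P.sh.SYT → P.sh.IsWordOf g w → l.length < (invs P.sh.nb w).card →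
      P.natCoeff l g = 0 := by
  intro l
  induction l with
  | nil =>
    intro g w _ hg hw hlen
    rw [PlacedSkewShape.natCoeff, dif_pos hg]
    have hid : P.heckeWord [] (P.sh.vOf P.sh.colReading) = P.sh.vOf P.sh.colReading := rfl
    have hne : g ≠ P.sh.colReading := by
      intro hc
      have hw1 : w = 1 := by
        ext m
        simp only [Equiv.Perm.one_apply]
        by_cases hm : m ∈ Finset.Icc 1 P.sh.nb
        · obtain ⟨b, hb, hbm⟩ := (colReading_bijOn P.sh).2.2 (by exact_mod_cast hm)
          have hb' : b ∈ P.sh.cells := by exact_mod_cast hb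
          rw [← hbm]
          rw [hw.1 b hb', hc]
        · exact hw.2 m hm
      rw [hw1] at hlen
      have hempty : invs P.sh.nb 1 = ∅ := by
        ext p
        simp only [invs, Finset.mem_filter, Finset.notMem_empty, iff_false, not_and]
        intro _ h1
        simp only [Equiv.Perm.one_apply]
        omega
      rw [hempty] at hlen
      simp at hlen
    rw [hid, vOf_apply P.sh _ hg, if_neg hne]
  | cons i l ih =>
    intro g w hsn hg hw hlen
    have hi := hsn i (by simp)
    have hsn' : IsSnWord P.sh.nb l := fun j hj => hsn j (by simp [hj])
    rw [natCoeff_cons P i l hg]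
    have hfix : IsFix P.sh.nb w := hw.2
    have h1 : P.natCoeff l g = 0 := ih g w hsn' hg hw (by simp at hlen ⊢; omega)
    rw [h1, mul_zero, zero_add]
    by_cases hstd : sApply i g ∈ P.sh.SYT
    · have hw' := isWordOf_sApply P.sh hw hi.1 hi.2
      have hcard : (invs P.sh.nb w).card ≤
          (invs P.sh.nb (Equiv.swap i (i + 1) * w)).card + 1 := by
        rcases lt_trichotomy (w⁻¹ i) (w⁻¹ (i + 1)) with h | h | h
        · have := card_invs_swap_mul_of_lt hfix hi.1 hi.2 h; omega
        · exact absurd (w⁻¹.injective h) (by omega)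
        · have := card_invs_swap_mul_of_gt hfix hi.1 hi.2 h; omega
      have h2 := ih (sApply i g) (Equiv.swap i (i + 1) * w) hsn' hstd hw'
        (by simp at hlen; omega)
      rw [h2, mul_zero]
    · rw [PlacedSkewShape.natCoeff, dif_neg hstd, mul_zero]

theorem reduced_tail {n i : ℕ} {w : Equiv.Perm ℕ} {l : List ℕ}
    (h : IsReducedWord n w (i :: l)) :
    IsReducedWord n (Equiv.swap i (i + 1) * w) l := by
  obtain ⟨hsn, hprod, hmin⟩ := h
  have hi := hsn i (by simp)
  have hsn' : IsSnWord n l := fun j hj => hsn j (by simp [hj])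
  have hprod' : wordProd l = Equiv.swap i (i + 1) * w := by
    rw [← hprod, wordProd_cons, ← mul_assoc, Equiv.swap_mul_self, one_mul]
  refine ⟨hsn', hprod', ?_⟩
  intro l' hsn'' hprod''
  have hw2 : wordProd (i :: l') = w := by
    rw [wordProd_cons, hprod'', ← mul_assoc, Equiv.swap_mul_self, one_mul]
  have hsn3 : IsSnWord n (i :: l') := by
    intro j hj
    rcases List.mem_cons.mp hj with rfl | hj
    · exact hi
    · exact hsn'' j hj
  have := hmin (i :: l') hsn3 hw2
  simp only [List.length_cons] at this
  omega

theorem main_induction (P : PlacedSkewShape) :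
    ∀ (l : List ℕ) (T : (ℕ × ℕ) → ℕ) (w : Equiv.Perm ℕ), T ∈ P.sh.SYT →
      P.sh.IsWordOf T w → IsReducedWord P.sh.nb w l →
      P.natCoeff l T = ∏ p ∈ P.sh.invSet T, (P.q⁻¹ + P.aIJ T p.1 p.2) := by
  intro l
  induction l with
  | nil =>
    intro T w hT hw hl
    have hw1 : w = 1 := by rw [← hl.2.1, wordProd_nil]
    have hTC : T = P.sh.colReading := by
      funext b
      by_cases hb : b ∈ P.sh.cells
      · have := hw.1 b hb
        rw [hw1] at this
        simpa using this.symm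
      · rw [hT.1.2 b hb, SkewShape.colReading, if_neg hb]
    have hinv : P.sh.invSet T = ∅ :=
      invSet_eq_empty P.sh hT (fun b _ => by rw [hTC])
    rw [hinv, Finset.prod_empty, PlacedSkewShape.natCoeff, dif_pos hT]
    have hid : P.heckeWord [] (P.sh.vOf P.sh.colReading) = P.sh.vOf P.sh.colReading := rfl
    rw [hid, vOf_apply P.sh _ hT, if_pos hTC]
  | cons i l ih =>
    intro T w hT hw hl
    have hi := hl.1 i (by simp)
    have hfix : IsFix P.sh.nb w := hw.2
    have hl' : IsReducedWord P.sh.nb (Equiv.swap i (i + 1) * w) l := reduced_tail hl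
    have hlen1 := reduced_length_eq hl
    have hlen2 := reduced_length_eq hl'
    simp only [List.length_cons] at hlen1
    have hdesc : w⁻¹ (i + 1) < w⁻¹ i := by
      rcases lt_trichotomy (w⁻¹ i) (w⁻¹ (i + 1)) with h | h | h
      · have := card_invs_swap_mul_of_lt hfix hi.1 hi.2 h
        omega
      · exact absurd (w⁻¹.injective h) (by omega)
      · exact h
    have hpos := key_pos P.sh hT hw hi.1 hi.2 hdesc
    have hT' : sApply i T ∈ P.sh.SYT := sApply_mem_SYT P.sh hT hi.1 hi.2 hpos.1 hpos.2
    have hw' := isWordOf_sApply P.sh hw hi.1 hi.2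
    rw [natCoeff_cons P i l hT]
    have hvan : P.natCoeff l T = 0 :=
      natCoeff_vanish P l T w hl'.1 hT hw (by omega)
    rw [hvan, mul_zero, zero_add, ih (sApply i T) _ hT' hw' hl']
    -- product identity
    have hiI : i ∈ Finset.Icc 1 P.sh.nb := by simp [mem_Icc]; omega
    have hi1I : i + 1 ∈ Finset.Icc 1 P.sh.nb := by simp [mem_Icc]; omega
    rw [invSet_step P.sh hT.1 hT'.1 hi.1 hi.2 hpos.1 hpos.2]
    rw [Finset.prod_insert ?notmem]
    case notmem =>
      simp only [mem_image, Prod.mk.injEq, not_exists, not_and]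
      rintro ⟨c, d⟩ hcd h1 h2
      simp only at h1 h2
      have h1' : c = i := (Equiv.swap i (i + 1)).injective (a₂ := i) (by simpa using h1)
      have h2' : d = i + 1 := (Equiv.swap i (i + 1)).injective (a₂ := i + 1) (by simpa using h2)
      subst h1'; subst h2'
      simp only [SkewShape.invSet, mem_filter] at hcd
      omega
    rw [Finset.prod_image (fun p _ q _ hpq => ?inj)]
    case inj =>
      simp only [Prod.mk.injEq] at hpq
      exact Prod.ext ((Equiv.swap i (i + 1)).injective hpq.1)
        ((Equiv.swap i (i + 1)).injective hpq.2)
    congr 1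
    · -- single factor
      rw [PlacedSkewShape.aI, PlacedSkewShape.aIJ, PlacedSkewShape.aIJ,
        boxOf_sApply P.sh hT.1 hT'.1 hi.1 hi.2 hiI,
        boxOf_sApply P.sh hT.1 hT'.1 hi.1 hi.2 hi1I,
        Equiv.swap_apply_left, Equiv.swap_apply_right]
    · refine Finset.prod_congr rfl fun p hp => ?_
      simp only [SkewShape.invSet, mem_filter, mem_product] at hp
      congr 1
      rw [PlacedSkewShape.aIJ, PlacedSkewShape.aIJ,
        boxOf_sApply P.sh hT.1 hT'.1 hi.1 hi.2 hp.1.1,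
        boxOf_sApply P.sh hT.1 hT'.1 hi.1 hi.2 hp.1.2]

end HeckeAux

/-- **Corollary (diagonal entries, affine Hecke algebra).**
For `T ∈ SYT(λ/μ)` and every reduced word `w_T = s_{i_1} ⋯ s_{i_k}`, the coefficient of
`v_T` in `(T_{i_1} ∘ ⋯ ∘ T_{i_k})(v_C)` equals
`∏_{(i,j) ∈ inv(T)} (q⁻¹ + ã_{i,j}(T))`, the product over all inversions of `T`. -/
theorem hecke_diagonal_transition_coefficient
    (P : PlacedSkewShape) (T : (ℕ × ℕ) → ℕ) (hT : T ∈ P.sh.SYT)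
    (w : Equiv.Perm ℕ) (hw : P.sh.IsWordOf T w)
    (l : List ℕ) (hl : IsReducedWord P.sh.nb w l) :
    P.natCoeff l T = ∏ p ∈ P.sh.invSet T, (P.q⁻¹ + P.aIJ T p.1 p.2) := by
  exact HeckeAux.main_induction P l T w hT hw hl
end
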